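/- arXiv:1609.08867 — 7 statements merged into one kernel-verified Lean document; each statement's English description precedes it below -/
import Mathlib

section
/- Let H : ℝ → ℝ be continuous and coercive, and let p, q ∈ ℝ. (1) If (p⁻, p) ∩ (q⁻, q) ≠ ∅, then H(p) ≤ H(q) if and only if [p⁻, p] ⊆ [q⁻, q] (equivalently q⁻ ≤ p⁻ < p ≤ q). (2) If (p, p⁺) ∩ (q, q⁺) ≠ ∅, then H(p) ≤ H(q) if and only if [q, q⁺] ⊆ [p, p⁺] (equivalently p ≤ q < q⁺ ≤ p⁺). (3) If (p⁻, p) ∩ (q, q⁺) ≠ ∅, then H(p) > H(q). -/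
/-!
Everything follows from two observations: `H r < H p` for `r ∈ (p⁻, p)` and `H p < H r` for
`r ∈ (p, p⁺)`. If `q⁻ < p⁻` in (1), some `s ∈ (p⁻, q⁻]` with `H s ≥ H q` (coercivity makes the set
defining `q⁻` nonempty) lies in `(p⁻, p)`, so `H q ≤ H s < H p`. Symmetrically, if `p⁺ < q⁺` in (2),
some `t ∈ [p⁺, q⁺)` with `H t ≤ H p` lies in `(q, q⁺)`, so `H q < H t ≤ H p`.
-/

open Set Filter Topology

/-- `p⁻ = sup {q < p : H(q) ≥ H(p)}`. -/
noncomputable def pminus (H : ℝ → ℝ) (p : ℝ) : ℝ :=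
  sSup {q : ℝ | q < p ∧ H p ≤ H q}

/-- `p⁺ = inf {q > p : H(q) ≤ H(p)}`, with `inf ∅ = +∞` (extended reals). -/
noncomputable def pplus (H : ℝ → ℝ) (p : ℝ) : EReal :=
  sInf (Real.toEReal '' {q : ℝ | p < q ∧ H q ≤ H p})

/-- `H(p) → +∞` as `|p| → +∞`. -/
def Coercive (H : ℝ → ℝ) : Prop :=
  Tendsto H atTop atTop ∧ Tendsto H atBot atTop

/-- `F(p) → +∞` as `p → -∞`. -/
def SemiCoercive (F : ℝ → ℝ) : Prop := Tendsto F atBot atTop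

/-- the open interval `(a⁻, a⁺)` (upper endpoint possibly `+∞`). -/
def ooMM (H : ℝ → ℝ) (a : ℝ) : Set ℝ :=
  {r : ℝ | pminus H a < r ∧ (r : EReal) < pplus H a}

/-- the open interval `(p, p⁺)` (upper endpoint possibly `+∞`). -/
def ooUp (H : ℝ → ℝ) (p : ℝ) : Set ℝ :=
  {r : ℝ | p < r ∧ (r : EReal) < pplus H p}

/-- the closed interval `[a⁻, a⁺]` (upper endpoint possibly `+∞`). -/
def ccMM (H : ℝ → ℝ) (a : ℝ) : Set ℝ :=
  {r : ℝ | pminus H a ≤ r ∧ (r : EReal) ≤ pplus H a}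

/-- `A` is a set limiter for `H`. -/
def IsSetLimiter (H : ℝ → ℝ) (A : Set ℝ) : Prop :=
  (∀ a ∈ A, (pminus H a : EReal) ≠ pplus H a) ∧
  (∀ a ∈ A, ∀ b ∈ A, a < b → H b ≤ H a) ∧
  (∀ p : ℝ, pminus H p < p → ∃ a ∈ A, (Ioo (pminus H p) p ∩ ooMM H a).Nonempty) ∧
  (∀ p : ℝ, (p : EReal) < pplus H p → ∃ a ∈ A, (ooUp H p ∩ ooMM H a).Nonempty)

open Classical in
/-- The `A`-limited flux function `F_A`: equal to `H(a)` on `[a⁻, a⁺]` for `a ∈ A`,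
and to `H` elsewhere. -/
noncomputable def limFlux (H : ℝ → ℝ) (A : Set ℝ) (p : ℝ) : ℝ :=
  if h : ∃ a, a ∈ A ∧ p ∈ ccMM H a then H h.choose else H p

/-- Condition (S) in the definition of `A_F`. -/
def CondS (H F : ℝ → ℝ) (p : ℝ) : Prop :=
  pminus H p ≠ p ∧ H p ≤ F p ∧
    ∀ q : ℝ, H q ≤ F q → (ooMM H q ∩ Ioo (pminus H p) p).Nonempty → H q ≤ H p

/-- Condition (T) in the definition of `A_F`. -/
def CondT (H F : ℝ → ℝ) (p : ℝ) : Prop :=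
  (p : EReal) ≠ pplus H p ∧ F p ≤ H p ∧
    ∀ q : ℝ, F q ≤ H q → (ooMM H q ∩ ooUp H p).Nonempty → H p ≤ H q

/-- The set `A_F` associated with a boundary function `F`. -/
def limiterOf (H F : ℝ → ℝ) : Set ℝ := {p : ℝ | CondS H F p ∨ CondT H F p}

variable {H : ℝ → ℝ} {p q r : ℝ}

lemma SemiCoercive.nonempty_pminus_set (hH : SemiCoercive H) (p : ℝ) :
    {q : ℝ | q < p ∧ H p ≤ H q}.Nonempty :=
  ((eventually_lt_atBot p).and (hH.eventually_ge_atTop (H p))).exists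

lemma apply_lt_of_mem_Ioo_pminus (hr : r ∈ Ioo (pminus H p) p) : H r < H p := by
  by_contra! h
  exact hr.1.not_ge (le_csSup ⟨p, fun _ hq => hq.1.le⟩ ⟨hr.2, h⟩)

lemma apply_lt_of_mem_ooUp (hr : r ∈ ooUp H p) : H p < H r := by
  by_contra! h
  exact hr.2.not_ge (sInf_le ⟨r, ⟨hr.1, h⟩, rfl⟩)

lemma pminus_le_pminus_of_apply_le (hH : SemiCoercive H) (hpq : H p ≤ H q)
    (hr : r ∈ Ioo (pminus H p) p) (hqr : pminus H q < r) : pminus H q ≤ pminus H p := by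
  by_contra! h
  obtain ⟨s, ⟨hsq, hqs⟩, hps⟩ := exists_lt_of_lt_csSup (hH.nonempty_pminus_set q) h
  have hsq' : s ≤ pminus H q := le_csSup ⟨q, fun _ ht => ht.1.le⟩ ⟨hsq, hqs⟩
  have hsp : H s < H p := apply_lt_of_mem_Ioo_pminus ⟨hps, by linarith [hr.2]⟩
  linarith

lemma pplus_le_pplus_of_apply_le (hpq : H p ≤ H q) (hr : r ∈ ooUp H p) (hqr : q < r) :
    pplus H q ≤ pplus H p := by
  by_contra! h
  obtain ⟨_, ⟨t, ⟨hpt, htp⟩, rfl⟩, htq⟩ := sInf_lt_iff.mp h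
  have hrt : (r : EReal) < t := hr.2.trans_le (sInf_le ⟨t, ⟨hpt, htp⟩, rfl⟩)
  have hqt : H q < H t := apply_lt_of_mem_ooUp ⟨hqr.trans (EReal.coe_lt_coe_iff.mp hrt), htq⟩
  linarith

lemma apply_le_iff_Icc_pminus_subset (hH : SemiCoercive H)
    (hpq : (Ioo (pminus H p) p ∩ Ioo (pminus H q) q).Nonempty) :
    H p ≤ H q ↔ Icc (pminus H p) p ⊆ Icc (pminus H q) q := by
  obtain ⟨r, hrp, hrq⟩ := hpq
  constructor
  · intro hle
    have hp_le_q : p ≤ q := by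
      by_contra! hqp
      exact hle.not_gt (apply_lt_of_mem_Ioo_pminus ⟨hrp.1.trans hrq.2, hqp⟩)
    exact Icc_subset_Icc (pminus_le_pminus_of_apply_le hH hle hrp hrq.1) hp_le_q
  · intro hsub
    obtain ⟨-, hp_le_q⟩ := hsub ⟨(hrp.1.trans hrp.2).le, le_rfl⟩
    rcases hp_le_q.eq_or_lt with rfl | hp_lt_q
    · exact le_rfl
    · exact (apply_lt_of_mem_Ioo_pminus ⟨hrq.1.trans hrp.2, hp_lt_q⟩).le

lemma apply_le_iff_Icc_pplus_subset (hpq : (ooUp H p ∩ ooUp H q).Nonempty) :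
    H p ≤ H q ↔
      {r : ℝ | q ≤ r ∧ (r : EReal) ≤ pplus H q} ⊆ {r : ℝ | p ≤ r ∧ (r : EReal) ≤ pplus H p} := by
  obtain ⟨r, hrp, hrq⟩ := hpq
  constructor
  · intro hle
    have hp_le_q : p ≤ q := by
      by_contra! hqp
      exact hle.not_gt (apply_lt_of_mem_ooUp ⟨hqp, (EReal.coe_lt_coe hrp.1).trans hrq.2⟩)
    have hplus := pplus_le_pplus_of_apply_le hle hrp hrq.1
    exact fun s hs => ⟨hp_le_q.trans hs.1, hs.2.trans hplus⟩
  · intro hsub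
    obtain ⟨hp_le_q, -⟩ := hsub ⟨le_rfl, ((EReal.coe_lt_coe hrq.1).trans hrq.2).le⟩
    rcases hp_le_q.eq_or_lt with rfl | hp_lt_q
    · exact le_rfl
    · exact (apply_lt_of_mem_ooUp ⟨hp_lt_q, (EReal.coe_lt_coe hrq.1).trans hrp.2⟩).le

lemma apply_lt_of_Ioo_pminus_inter_ooUp_nonempty
    (hpq : (Ioo (pminus H p) p ∩ ooUp H q).Nonempty) : H q < H p := by
  obtain ⟨r, hrp, hrq⟩ := hpq
  exact (apply_lt_of_mem_ooUp hrq).trans (apply_lt_of_mem_Ioo_pminus hrp)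

theorem stmt1_general (H : ℝ → ℝ) (hcoer : Coercive H) (p q : ℝ) :
    ((Ioo (pminus H p) p ∩ Ioo (pminus H q) q).Nonempty →
      (H p ≤ H q ↔ Icc (pminus H p) p ⊆ Icc (pminus H q) q)) ∧
    ((ooUp H p ∩ ooUp H q).Nonempty →
      (H p ≤ H q ↔
        {r : ℝ | q ≤ r ∧ (r : EReal) ≤ pplus H q} ⊆
          {r : ℝ | p ≤ r ∧ (r : EReal) ≤ pplus H p})) ∧
    ((Ioo (pminus H p) p ∩ ooUp H q).Nonempty → H q < H p) :=
  ⟨apply_le_iff_Icc_pminus_subset hcoer.2, apply_le_iff_Icc_pplus_subset,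
    apply_lt_of_Ioo_pminus_inter_ooUp_nonempty⟩

theorem stmt1 (H : ℝ → ℝ) (hH : Continuous H) (hcoer : Coercive H) (p q : ℝ) :
    ((Ioo (pminus H p) p ∩ Ioo (pminus H q) q).Nonempty →
      (H p ≤ H q ↔ Icc (pminus H p) p ⊆ Icc (pminus H q) q)) ∧
    ((ooUp H p ∩ ooUp H q).Nonempty →
      (H p ≤ H q ↔
        {r : ℝ | q ≤ r ∧ (r : EReal) ≤ pplus H q} ⊆
          {r : ℝ | p ≤ r ∧ (r : EReal) ≤ pplus H p})) ∧
    ((Ioo (pminus H p) p ∩ ooUp H q).Nonempty → H q < H p) :=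
  stmt1_general H hcoer p q
end

section
/- Let H : ℝ → ℝ be continuous and coercive. If p₁ < p₂ and H(p₁) ≥ H(p₂), then the open intervals (p₁⁻, p₁⁺) and (p₂⁻, p₂⁺) are disjoint. -/
open Set Filter Topology

/- On `(p, p⁺)` the function `H` stays strictly above `H(p)`, and on `(p⁻, p)` strictly below it.
Since `H(p₂) ≤ H(p₁)`, the point `p₂` bounds `p₁⁺` from above and `p₁` bounds `p₂⁻` from below,
so a common point `r` of the two intervals lies in `(p₁, p₂)` and would satisfy
`H(p₁) < H(r) < H(p₂)`. -/

section

variable {H : ℝ → ℝ} {p q r : ℝ}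

theorem pplus_le_of_apply_le (hpq : p < q) (hq : H q ≤ H p) : pplus H p ≤ q :=
  sInf_le ⟨q, ⟨hpq, hq⟩, rfl⟩

theorem le_pminus_of_le_apply (hqp : q < p) (hq : H p ≤ H q) : q ≤ pminus H p :=
  le_csSup ⟨p, fun _ hs => hs.1.le⟩ ⟨hqp, hq⟩

theorem apply_lt_of_lt_pplus (hpr : p < r) (hr : (r : EReal) < pplus H p) : H p < H r := by
  by_contra! hle
  exact (pplus_le_of_apply_le hpr hle).not_gt hr

theorem apply_lt_of_pminus_lt (hrp : r < p) (hr : pminus H p < r) : H r < H p := by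
  by_contra! hle
  exact (le_pminus_of_le_apply hrp hle).not_gt hr

end

theorem stmt2_general (H : ℝ → ℝ)
    (p₁ p₂ : ℝ) (hlt : p₁ < p₂) (hge : H p₂ ≤ H p₁) :
    ooMM H p₁ ∩ ooMM H p₂ = ∅ := by
  refine eq_empty_of_forall_notMem fun r ⟨⟨_, hr₁⟩, ⟨hr₂, _⟩⟩ => ?_
  have hrp₂ : r < p₂ := by exact_mod_cast hr₁.trans_le (pplus_le_of_apply_le hlt hge)
  have hp₁r : p₁ < r := (le_pminus_of_le_apply hlt hge).trans_lt hr₂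
  have hH₁ := apply_lt_of_lt_pplus hp₁r hr₁
  have hH₂ := apply_lt_of_pminus_lt hrp₂ hr₂
  linarith

theorem stmt2 (H : ℝ → ℝ) (hH : Continuous H) (hcoer : Coercive H)
    (p₁ p₂ : ℝ) (hlt : p₁ < p₂) (hge : H p₂ ≤ H p₁) :
    ooMM H p₁ ∩ ooMM H p₂ = ∅ :=
  stmt2_general H p₁ p₂ hlt hge
end

section
/- Let H : ℝ → ℝ be continuous and coercive, and let F : ℝ → ℝ be continuous, non-increasing and semi-coercive. Then for every p ∈ ℝ, min(F(p), H(p)) ≤ F_{A_F}(p) ≤ max(F(p), H(p)), where F_{A_F} is the A_F-limited flux function associated with the set limiter A_F. -/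
open Set Filter Topology

/-! If `p ∈ [a⁻, a⁺]` with `a ∈ A_F` and `p` is not an endpoint, then `H p` and `H a` compare
strictly, say `p < a` and `H p < H a`, and one has to show `H a ≤ F p`. Under (S) this is
`H a ≤ F a ≤ F p`. Under (T), if `F p < H a`, let `q` be the last point of `[p, a]` with
`H q = c := max (H p) (F p)`: then `F q ≤ F p ≤ H q`, and `H > c` on `(q, a⁺)`, so `q⁺ ≥ a⁺`;
thus `(q⁻, q⁺)` meets `(a, a⁺)` and (T) gives `H a ≤ H q = c < H a`. The case `p > a` is the
mirror image under (S); at the endpoints `H p = H a` by continuity. -/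

section PminusPplus

variable {H : ℝ → ℝ}

lemma pminus_set_nonempty (hbot : Tendsto H atBot atTop) (a : ℝ) :
    {q : ℝ | q < a ∧ H a ≤ H q}.Nonempty :=
  ((eventually_lt_atBot a).and (hbot.eventually_ge_atTop (H a))).exists

lemma pminus_le_of_forall (hbot : Tendsto H atBot atTop) {a x : ℝ}
    (h : ∀ r < a, H a ≤ H r → r ≤ x) : pminus H a ≤ x :=
  csSup_le (pminus_set_nonempty hbot a) fun r hr => h r hr.1 hr.2

lemma pminus_le_self (hbot : Tendsto H atBot atTop) (a : ℝ) : pminus H a ≤ a :=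
  pminus_le_of_forall hbot fun _ hr _ => hr.le

lemma apply_lt_of_pminus_lt_s6 {a r : ℝ} (h₁ : pminus H a < r) (h₂ : r < a) : H r < H a := by
  by_contra! h
  have hr : r ∈ {q : ℝ | q < a ∧ H a ≤ H q} := ⟨h₂, h⟩
  exact (le_csSup ⟨a, fun x hx => hx.1.le⟩ hr).not_gt h₁

lemma apply_pminus_eq (hH : Continuous H) (hbot : Tendsto H atBot atTop) {a : ℝ}
    (hlt : pminus H a < a) : H (pminus H a) = H a := by
  have hne := pminus_set_nonempty hbot a
  have hlub : IsLUB {q : ℝ | q < a ∧ H a ≤ H q} (pminus H a) :=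
    isLUB_csSup hne ⟨a, fun x hx => hx.1.le⟩
  have hle : H (pminus H a) ≤ H a := by
    have hcl : pminus H a ∈ closure (Ioo (pminus H a) a) := by
      rw [closure_Ioo hlt.ne]; exact left_mem_Icc.2 hlt.le
    exact closure_minimal (fun r hr => (apply_lt_of_pminus_lt_s6 hr.1 hr.2).le)
      (isClosed_le hH continuous_const) hcl
  exact le_antisymm hle <|
    closure_minimal (fun x hx => hx.2) (isClosed_le continuous_const hH) (hlub.mem_closure hne)

lemma le_pplus_of_forall {a : ℝ} {x : EReal} (h : ∀ r, a < r → H r ≤ H a → x ≤ r) :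
    x ≤ pplus H a :=
  le_sInf <| forall_mem_image.2 fun r hr => h r hr.1 hr.2

lemma coe_le_pplus_self (a : ℝ) : (a : EReal) ≤ pplus H a :=
  le_pplus_of_forall fun _ hr _ => EReal.coe_le_coe_iff.2 hr.le

lemma apply_lt_of_lt_pplus_s6 {a r : ℝ} (h₁ : a < r) (h₂ : (r : EReal) < pplus H a) :
    H a < H r := by
  by_contra! h
  have hr : r ∈ {q : ℝ | a < q ∧ H q ≤ H a} := ⟨h₁, h⟩
  exact (sInf_le (mem_image_of_mem _ hr)).not_gt h₂

lemma isGLB_of_coe_eq_pplus {a t : ℝ} (h : (t : EReal) = pplus H a) :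
    IsGLB {q : ℝ | a < q ∧ H q ≤ H a} t :=
  ⟨fun _ hq => EReal.coe_le_coe_iff.1 (h ▸ sInf_le (mem_image_of_mem _ hq)),
    fun _ hb => EReal.coe_le_coe_iff.1 (h ▸ le_pplus_of_forall fun _ hr hr' =>
      EReal.coe_le_coe_iff.2 (hb ⟨hr, hr'⟩))⟩

lemma apply_eq_of_coe_eq_pplus (hH : Continuous H) {a t : ℝ} (h₁ : a < t)
    (h₂ : (t : EReal) = pplus H a) : H t = H a := by
  have hne : {q : ℝ | a < q ∧ H q ≤ H a}.Nonempty := by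
    by_contra hempty
    rw [not_nonempty_iff_eq_empty] at hempty
    simp [pplus, hempty] at h₂
  have hle : H t ≤ H a :=
    closure_minimal (fun x hx => hx.2) (isClosed_le hH continuous_const)
      ((isGLB_of_coe_eq_pplus h₂).mem_closure hne)
  have hcl : t ∈ closure (Ioo a t) := by
    rw [closure_Ioo h₁.ne]; exact right_mem_Icc.2 h₁.le
  exact le_antisymm hle <| closure_minimal (t := {x | H a ≤ H x})
    (fun r hr => (apply_lt_of_lt_pplus_s6 hr.1 (by rw [← h₂]; exact_mod_cast hr.2)).le)
    (isClosed_le continuous_const hH) hcl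

end PminusPplus

section FirstCrossing

variable {H : ℝ → ℝ}

lemma exists_last_apply_eq_of_le_of_lt (hH : Continuous H) {p a c : ℝ} (hpa : p ≤ a)
    (hp : H p ≤ c) (ha : c < H a) : ∃ q ∈ Ico p a, H q = c ∧ ∀ r ∈ Ioc q a, c < H r := by
  obtain ⟨q, ⟨⟨hpq, hqa⟩, hqc⟩, hmax⟩ :=
    (isCompact_Icc.inter_right (isClosed_le hH continuous_const)).exists_isGreatest
      (⟨p, ⟨le_rfl, hpa⟩, hp⟩ : (Icc p a ∩ {x | H x ≤ c}).Nonempty)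
  have hqa' : q < a := hqa.lt_of_ne fun h => (h ▸ hqc).not_gt ha
  have habove : ∀ r ∈ Ioc q a, c < H r := fun r hr =>
    not_le.1 fun hrc => (hmax ⟨⟨hpq.trans hr.1.le, hr.2⟩, hrc⟩).not_gt hr.1
  have hcl : q ∈ closure (Ioo q a) := by
    rw [closure_Ioo hqa'.ne]; exact left_mem_Icc.2 hqa'.le
  refine ⟨q, ⟨hpq, hqa'⟩, le_antisymm hqc ?_, habove⟩
  exact closure_minimal (t := {x | c ≤ H x}) (fun r hr => (habove r (Ioo_subset_Ioc_self hr)).le)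
    (isClosed_le continuous_const hH) hcl

lemma exists_first_apply_eq_of_lt_of_le (hH : Continuous H) {a p c : ℝ} (hap : a ≤ p)
    (ha : H a < c) (hp : c ≤ H p) : ∃ q ∈ Ioc a p, H q = c ∧ ∀ r ∈ Ico a q, H r < c := by
  obtain ⟨q, ⟨⟨haq, hqp⟩, hqc⟩, hmin⟩ :=
    (isCompact_Icc.inter_right (isClosed_le continuous_const hH)).exists_isLeast
      (⟨p, ⟨hap, le_rfl⟩, hp⟩ : (Icc a p ∩ {x | c ≤ H x}).Nonempty)
  have haq' : a < q := haq.lt_of_ne' fun h => (h ▸ hqc).not_gt ha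
  have hbelow : ∀ r ∈ Ico a q, H r < c := fun r hr =>
    not_le.1 fun hrc => (hmin ⟨⟨hr.1, hr.2.le.trans hqp⟩, hrc⟩).not_gt hr.2
  have hcl : q ∈ closure (Ioo a q) := by
    rw [closure_Ioo haq'.ne]; exact right_mem_Icc.2 haq'.le
  refine ⟨q, ⟨haq', hqp⟩, le_antisymm ?_ hqc, hbelow⟩
  exact closure_minimal (t := {x | H x ≤ c}) (fun r hr => (hbelow r (Ioo_subset_Ico_self hr)).le)
    (isClosed_le hH continuous_const) hcl

end FirstCrossing

section Limiter

variable {H F : ℝ → ℝ}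

lemma CondT.apply_le_of_lt (hH : Continuous H) (hbot : Tendsto H atBot atTop)
    (hFanti : Antitone F) {a p : ℝ} (ha : CondT H F a) (hpa : p < a) (hHp : H p < H a) :
    H a ≤ F p := by
  by_contra! hFp
  set c := max (H p) (F p)
  have hca : c < H a := max_lt hHp hFp
  obtain ⟨q, ⟨hpq, hqa⟩, hqc, habove⟩ :=
    exists_last_apply_eq_of_le_of_lt hH hpa.le (le_max_left _ _) hca
  have hFq : F q ≤ H q := hqc ▸ (hFanti hpq).trans (le_max_right _ _)
  have hpplus : pplus H a ≤ pplus H q := le_pplus_of_forall fun r hqr hrq => by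
    by_contra! hra
    rcases le_or_gt r a with hra' | hra'
    · exact (habove r ⟨hqr, hra'⟩).not_ge (hrq.trans hqc.le)
    · exact (hca.trans (apply_lt_of_lt_pplus_s6 hra' hra)).not_ge (hrq.trans hqc.le)
  obtain ⟨r, har, hra⟩ :=
    EReal.exists_between_coe_real ((coe_le_pplus_self a).lt_of_ne ha.1)
  have hr : r ∈ ooMM H q ∩ ooUp H a :=
    ⟨⟨(pminus_le_self hbot q).trans_lt (hqa.trans (EReal.coe_lt_coe_iff.1 har)),
      hra.trans_le hpplus⟩, ⟨EReal.coe_lt_coe_iff.1 har, hra⟩⟩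
  exact (ha.2.2 q hFq ⟨r, hr⟩).not_gt (hqc ▸ hca)

lemma CondS.le_apply_of_lt (hH : Continuous H) (hbot : Tendsto H atBot atTop)
    (hFanti : Antitone F) {a p : ℝ} (ha : CondS H F a) (hap : a < p) (hHp : H a < H p) :
    F p ≤ H a := by
  by_contra! hFp
  set c := min (H p) (F p)
  have hac : H a < c := lt_min hHp hFp
  obtain ⟨q, ⟨haq, hqp⟩, hqc, hbelow⟩ :=
    exists_first_apply_eq_of_lt_of_le hH hap.le hac (min_le_left _ _)
  have hHq : H q ≤ F q := hqc ▸ (min_le_right _ _).trans (hFanti hqp)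
  have hpminus : pminus H q ≤ pminus H a := pminus_le_of_forall hbot fun r hrq hqr => by
    by_contra! har
    rcases lt_or_ge r a with hra | hra
    · exact ((apply_lt_of_pminus_lt_s6 har hra).trans hac).not_ge (hqc.ge.trans hqr)
    · exact (hbelow r ⟨hra, hrq⟩).not_ge (hqc.ge.trans hqr)
  obtain ⟨r, har, hra⟩ := exists_between ((pminus_le_self hbot a).lt_of_ne ha.1)
  have hr : r ∈ ooMM H q ∩ Ioo (pminus H a) a :=
    ⟨⟨hpminus.trans_lt har, (EReal.coe_lt_coe_iff.2 (hra.trans haq)).trans_le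
      (coe_le_pplus_self q)⟩, ⟨har, hra⟩⟩
  exact (ha.2.2 q hHq ⟨r, hr⟩).not_gt (hqc ▸ hac)

lemma apply_mem_uIcc_of_mem_ccMM (hH : Continuous H) (hbot : Tendsto H atBot atTop)
    (hFanti : Antitone F) {a p : ℝ} (ha : a ∈ limiterOf H F) (hp : p ∈ ccMM H a) :
    H a ∈ uIcc (F p) (H p) := by
  obtain ⟨hap₁, hap₂⟩ := hp
  rcases lt_trichotomy p a with hpa | rfl | hap
  · rcases hap₁.eq_or_lt with heq | hlt
    · rw [← heq, apply_pminus_eq hH hbot (heq ▸ hpa)]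
      exact right_mem_uIcc
    · have hHp := apply_lt_of_pminus_lt_s6 hlt hpa
      refine mem_uIcc_of_ge hHp.le ?_
      rcases ha with hS | hT
      · exact hS.2.1.trans (hFanti hpa.le)
      · exact hT.apply_le_of_lt hH hbot hFanti hpa hHp
  · exact right_mem_uIcc
  · rcases hap₂.eq_or_lt with heq | hlt
    · rw [← apply_eq_of_coe_eq_pplus hH hap heq]
      exact right_mem_uIcc
    · have hHp := apply_lt_of_lt_pplus_s6 hap hlt
      refine mem_uIcc_of_le ?_ hHp.le
      rcases ha with hS | hT
      · exact hS.le_apply_of_lt hH hbot hFanti hap hHp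
      · exact (hFanti hap.le).trans hT.2.1

end Limiter

theorem stmt6_general (H F : ℝ → ℝ) (hH : Continuous H) (hcoer : Coercive H)
    (hFanti : Antitone F) (p : ℝ) :
    min (F p) (H p) ≤ limFlux H (limiterOf H F) p ∧
    limFlux H (limiterOf H F) p ≤ max (F p) (H p) := by
  show limFlux H (limiterOf H F) p ∈ uIcc (F p) (H p)
  unfold limFlux
  split_ifs with h
  · exact apply_mem_uIcc_of_mem_ccMM hH hcoer.2 hFanti h.choose_spec.1 h.choose_spec.2
  · exact right_mem_uIcc

theorem stmt6 (H F : ℝ → ℝ) (hH : Continuous H) (hcoer : Coercive H)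
    (hF : Continuous F) (hFanti : Antitone F) (hFsc : SemiCoercive F) (p : ℝ) :
    min (F p) (H p) ≤ limFlux H (limiterOf H F) p ∧
    limFlux H (limiterOf H F) p ≤ max (F p) (H p) :=
  stmt6_general H F hH hcoer hFanti p
end

section
/- Let H : ℝ → ℝ be continuous and coercive and let A be a set limiter for H. Then the set limiter A_{F_A} associated to the A-limited flux function F_A equals A, i.e. A_{F_A} = A. -/
open Set Filter Topology

/-!
Near a point `p` the graph of `H` has a fixed shape: `H < H p` on `(p⁻, p)`, `H > H p` on
`(p, p⁺)`, and `H` takes the value `H p` at the finite endpoints `p⁻`, `p⁺`. For `a < b` in a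
set limiter, `a ≤ b⁻`, so `b⁻ ∈ [a, a⁺]` as soon as `[a⁻, a⁺]` and `[b⁻, b⁺]` meet; then
`H a ≤ H b⁻ = H b ≤ H a`, and `F_A` is well defined.

The heart of the proof is that `F_A q ≤ H a` whenever `a ∈ A` and `a ≤ q` (and symmetrically).
The only danger is a point `q > a` outside every `[b⁻, b⁺]` with `H q > H a`. Let `p` be the last
point of `[a, q]` at level `H a`; then `q ∈ (p, p⁺)`, and the `b ∈ A` that condition (3) provides
for `(p, p⁺)` has an endpoint `e` of `[b⁻, b⁺]` between its point in `(p, p⁺)` and `q`. So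
`H p < H e = H b ≤ H a = H p`. With these bounds, conditions (S) and (T) for `F_A` reduce to
comparing levels inside `(p⁻, p)` and `(p, p⁺)`.
-/

variable {H : ℝ → ℝ} {A : Set ℝ} {a b c p q s x : ℝ}

lemma Coercive.exists_lt_le_apply (hcoer : Coercive H) (p : ℝ) : ∃ q, q < p ∧ H p ≤ H q :=
  ((eventually_lt_atBot p).and (hcoer.2.eventually_ge_atTop (H p))).exists

lemma isLUB_pminus (hcoer : Coercive H) (p : ℝ) :
    IsLUB {q | q < p ∧ H p ≤ H q} (pminus H p) :=
  isLUB_csSup (hcoer.exists_lt_le_apply p) ⟨p, fun _ hq => hq.1.le⟩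

lemma pminus_le (hcoer : Coercive H) (p : ℝ) : pminus H p ≤ p :=
  (isLUB_pminus hcoer p).2 fun _ hq => hq.1.le

lemma le_pminus (hpq : p < q) (h : H q ≤ H p) : p ≤ pminus H q :=
  le_csSup ⟨q, fun _ hr => hr.1.le⟩ ⟨hpq, h⟩

lemma H_lt_of_mem_Ioo_pminus (hs : s ∈ Ioo (pminus H p) p) : H s < H p :=
  not_le.1 fun h => (le_pminus hs.2 h).not_gt hs.1

lemma le_pplus (H : ℝ → ℝ) (p : ℝ) : (p : EReal) ≤ pplus H p :=
  le_sInf (forall_mem_image.2 fun _ hq => EReal.coe_le_coe_iff.2 hq.1.le)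

lemma pplus_le (hpq : p < q) (h : H q ≤ H p) : pplus H p ≤ q :=
  sInf_le (mem_image_of_mem _ ⟨hpq, h⟩)

lemma H_lt_of_mem_ooUp (hs : s ∈ ooUp H p) : H p < H s :=
  not_le.1 fun h => (pplus_le hs.1 h).not_gt hs.2

lemma exists_pplus_eq_coe (h : pplus H p < q) : ∃ c : ℝ, pplus H p = c :=
  ⟨_, (EReal.coe_toReal h.ne_top (ne_bot_of_le_ne_bot (EReal.coe_ne_bot p) (le_pplus H p))).symm⟩

lemma isGLB_of_pplus_eq (h : pplus H p = c) : IsGLB {q | p < q ∧ H q ≤ H p} c := by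
  have hglb := isGLB_sInf (Real.toEReal '' {q | p < q ∧ H q ≤ H p})
  rw [← pplus, h] at hglb
  exact ⟨fun q hq => EReal.coe_le_coe_iff.1 (hglb.1 (mem_image_of_mem _ hq)),
    fun y hy => EReal.coe_le_coe_iff.1
      (hglb.2 (forall_mem_image.2 fun _ hq => EReal.coe_le_coe_iff.2 (hy hq)))⟩

lemma H_pminus_eq (hH : Continuous H) (hcoer : Coercive H) (p : ℝ) : H (pminus H p) = H p := by
  refine le_antisymm ?_ ?_
  · rcases (pminus_le hcoer p).eq_or_lt with h | h
    · rw [h]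
    · have hmem : pminus H p ∈ closure (Ioo (pminus H p) p) := by
        rw [closure_Ioo h.ne]
        exact left_mem_Icc.2 h.le
      exact closure_minimal (fun s hs => (H_lt_of_mem_Ioo_pminus hs).le)
        (isClosed_le hH continuous_const) hmem
  · exact closure_minimal (fun q hq => hq.2) (isClosed_le continuous_const hH)
      ((isLUB_pminus hcoer p).mem_closure (hcoer.exists_lt_le_apply p))

lemma H_pplus_eq (hH : Continuous H) (h : pplus H p = c) : H c = H p := by
  refine le_antisymm ?_ ?_
  · have hglb := isGLB_of_pplus_eq h
    exact closure_minimal (fun q hq => hq.2) (isClosed_le hH continuous_const)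
      (hglb.mem_closure hglb.nonempty)
  · have hpc : p ≤ c := EReal.coe_le_coe_iff.1 (h ▸ le_pplus H p)
    rcases hpc.eq_or_lt with rfl | hpc
    · rfl
    · have hmem : c ∈ closure (Ioo p c) := by
        rw [closure_Ioo hpc.ne]
        exact right_mem_Icc.2 hpc.le
      have hgt : Ioo p c ⊆ {x | H p ≤ H x} := fun s hs =>
        (H_lt_of_mem_ooUp ⟨hs.1, h ▸ EReal.coe_lt_coe_iff.2 hs.2⟩).le
      exact closure_minimal hgt (isClosed_le continuous_const hH) hmem

lemma H_le_of_le_of_le_pplus (hH : Continuous H) (hpx : p ≤ x) (hx : (x : EReal) ≤ pplus H p) :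
    H p ≤ H x := by
  rcases hx.lt_or_eq with hx | hx
  · rcases hpx.eq_or_lt with rfl | hpx
    · rfl
    · exact (H_lt_of_mem_ooUp ⟨hpx, hx⟩).le
  · exact (H_pplus_eq hH hx.symm).ge

lemma mem_ccMM_self (hcoer : Coercive H) (a : ℝ) : a ∈ ccMM H a :=
  ⟨pminus_le hcoer a, le_pplus H a⟩

/-- If `[b⁻, b⁺]` meets `(p, p⁺)` but misses `q ∈ (p, p⁺)`, one of its endpoints lies in
`(p, p⁺)`. -/
lemma lt_H_of_mem_ooUp_of_not_mem_ccMM (hH : Continuous H) (hcoer : Coercive H)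
    (hs : s ∈ ooUp H p) (hsb : s ∈ ooMM H b) (hq : q ∈ ooUp H p) (hqb : q ∉ ccMM H b) :
    H p < H b := by
  rcases not_and_or.1 hqb with hlt | hlt
  · rw [← H_pminus_eq hH hcoer b]
    exact H_lt_of_mem_ooUp
      ⟨hq.1.trans (not_le.1 hlt), (EReal.coe_lt_coe_iff.2 hsb.1).trans hs.2⟩
  · have hlt := not_le.1 hlt
    obtain ⟨c, hc⟩ := exists_pplus_eq_coe hlt
    rw [← H_pplus_eq hH hc]
    exact H_lt_of_mem_ooUp
      ⟨hs.1.trans (EReal.coe_lt_coe_iff.1 (hc ▸ hsb.2)), hc ▸ hlt.trans hq.2⟩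

lemma H_lt_of_mem_Ioo_pminus_of_not_mem_ccMM (hH : Continuous H) (hcoer : Coercive H)
    (hs : s ∈ Ioo (pminus H p) p) (hsb : s ∈ ooMM H b) (hq : q ∈ Ioo (pminus H p) p)
    (hqb : q ∉ ccMM H b) : H b < H p := by
  rcases not_and_or.1 hqb with hlt | hlt
  · rw [← H_pminus_eq hH hcoer b]
    exact H_lt_of_mem_Ioo_pminus ⟨hq.1.trans (not_le.1 hlt), hsb.1.trans hs.2⟩
  · have hlt := not_le.1 hlt
    obtain ⟨c, hc⟩ := exists_pplus_eq_coe hlt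
    rw [← H_pplus_eq hH hc]
    exact H_lt_of_mem_Ioo_pminus
      ⟨hs.1.trans (EReal.coe_lt_coe_iff.1 (hc ▸ hsb.2)),
        (EReal.coe_lt_coe_iff.1 (hc ▸ hlt)).trans hq.2⟩

lemma exists_level_right (hH : Continuous H) (haq : a < q) (hq : H a < H q) :
    ∃ p, a ≤ p ∧ H p = H a ∧ q ∈ ooUp H p := by
  set S := Icc a q ∩ {t | H t ≤ H a}
  have hbdd : BddAbove S := ⟨q, fun _ ht => ht.1.2⟩
  have hpS : sSup S ∈ S := (isClosed_Icc.inter (isClosed_le hH continuous_const)).csSup_mem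
    ⟨a, ⟨le_rfl, haq.le⟩, le_refl (H a)⟩ hbdd
  set p := sSup S
  have hgt : ∀ t ∈ Ioc p q, H a < H t := fun t ht =>
    not_le.1 fun h => ht.1.not_ge (le_csSup hbdd ⟨⟨hpS.1.1.trans ht.1.le, ht.2⟩, h⟩)
  have hpq : p < q := hpS.1.2.lt_of_ne fun h => (h ▸ hpS.2).not_gt hq
  have hHp : H p = H a := by
    refine le_antisymm hpS.2 (not_lt.1 fun hlt => ?_)
    obtain ⟨t, ht, hta⟩ := intermediate_value_Ioo hpq.le hH.continuousOn ⟨hlt, hq⟩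
    exact (hgt t ⟨ht.1, ht.2.le⟩).ne' hta
  refine ⟨p, hpS.1.1, hHp, hpq, ?_⟩
  have hle : (q : EReal) ≤ pplus H p := le_sInf <| forall_mem_image.2 fun t ht =>
    EReal.coe_le_coe_iff.2 <| not_lt.1 fun htq => (hgt t ⟨ht.1, htq.le⟩).not_ge (hHp ▸ ht.2)
  refine hle.lt_of_ne fun h => ?_
  linarith [H_pplus_eq hH h.symm]

lemma exists_level_left (hH : Continuous H) (hcoer : Coercive H) (hqa : q < a)
    (hq : H q < H a) : ∃ p, p ≤ a ∧ H p = H a ∧ q ∈ Ioo (pminus H p) p := by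
  set S := Icc q a ∩ {t | H a ≤ H t}
  have hbdd : BddBelow S := ⟨q, fun _ ht => ht.1.1⟩
  have hpS : sInf S ∈ S := (isClosed_Icc.inter (isClosed_le continuous_const hH)).csInf_mem
    ⟨a, ⟨hqa.le, le_rfl⟩, le_refl (H a)⟩ hbdd
  set p := sInf S
  have hlt : ∀ t ∈ Ico q p, H t < H a := fun t ht =>
    not_le.1 fun h => ht.2.not_ge (csInf_le hbdd ⟨⟨ht.1, ht.2.le.trans hpS.1.2⟩, h⟩)
  have hqp : q < p := hpS.1.1.lt_of_ne' fun h => (h ▸ hpS.2).not_gt hq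
  have hHp : H p = H a := by
    refine le_antisymm (not_lt.1 fun hgt => ?_) hpS.2
    obtain ⟨t, ht, hta⟩ := intermediate_value_Ioo hqp.le hH.continuousOn ⟨hq, hgt⟩
    exact (hlt t ⟨ht.1.le, ht.2⟩).ne hta
  refine ⟨p, hpS.1.2, hHp, ?_, hqp⟩
  have hle : pminus H p ≤ q := (isLUB_pminus hcoer p).2 fun t ht =>
    not_lt.1 fun hqt => (hlt t ⟨hqt.le, ht.1⟩).not_ge (hHp ▸ ht.2)
  refine hle.lt_of_ne fun h => ?_
  have hHq := H_pminus_eq hH hcoer p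
  rw [h] at hHq
  linarith

namespace IsSetLimiter

lemma antitoneOn (hA : IsSetLimiter H A) : AntitoneOn H A := fun a ha b hb hab =>
  hab.eq_or_lt.elim (fun h => h ▸ le_rfl) (hA.2.1 a ha b hb)

lemma le_pminus (hA : IsSetLimiter H A) (ha : a ∈ A) (hb : b ∈ A) (hab : a < b) :
    a ≤ pminus H b :=
  _root_.le_pminus hab (hA.2.1 a ha b hb hab)

lemma pplus_le (hA : IsSetLimiter H A) (ha : a ∈ A) (hb : b ∈ A) (hab : a < b) :
    pplus H a ≤ b :=
  _root_.pplus_le hab (hA.2.1 a ha b hb hab)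

lemma H_le_of_mem_ccMM (hH : Continuous H) (hcoer : Coercive H) (hA : IsSetLimiter H A)
    (ha : a ∈ A) (hb : b ∈ A) (hab : a < b) (hxa : x ∈ ccMM H a) (hxb : x ∈ ccMM H b) :
    H a ≤ H b :=
  calc H a ≤ H (pminus H b) := H_le_of_le_of_le_pplus hH (hA.le_pminus ha hb hab)
        ((EReal.coe_le_coe_iff.2 hxb.1).trans hxa.2)
    _ = H b := H_pminus_eq hH hcoer b

lemma H_eq_of_mem_ccMM (hH : Continuous H) (hcoer : Coercive H) (hA : IsSetLimiter H A)
    (ha : a ∈ A) (hb : b ∈ A) (hxa : x ∈ ccMM H a) (hxb : x ∈ ccMM H b) : H a = H b := by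
  rcases lt_trichotomy a b with hab | rfl | hab
  · exact le_antisymm (hA.H_le_of_mem_ccMM hH hcoer ha hb hab hxa hxb) (hA.2.1 a ha b hb hab)
  · rfl
  · exact le_antisymm (hA.2.1 b hb a ha hab) (hA.H_le_of_mem_ccMM hH hcoer hb ha hab hxb hxa)

lemma limFlux_eq (hH : Continuous H) (hcoer : Coercive H) (hA : IsSetLimiter H A)
    (ha : a ∈ A) (hx : x ∈ ccMM H a) : limFlux H A x = H a := by
  have hex : ∃ b, b ∈ A ∧ x ∈ ccMM H b := ⟨a, ha, hx⟩
  rw [limFlux, dif_pos hex]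
  exact hA.H_eq_of_mem_ccMM hH hcoer hex.choose_spec.1 ha hex.choose_spec.2 hx

lemma limFlux_self (hH : Continuous H) (hcoer : Coercive H) (hA : IsSetLimiter H A)
    (ha : a ∈ A) : limFlux H A a = H a :=
  hA.limFlux_eq hH hcoer ha (mem_ccMM_self hcoer a)

lemma H_le_of_forall_not_mem_ccMM (hH : Continuous H) (hcoer : Coercive H)
    (hA : IsSetLimiter H A) (ha : a ∈ A) (haq : a < q) (hq : ∀ b ∈ A, q ∉ ccMM H b) :
    H q ≤ H a := by
  by_contra! hlt
  obtain ⟨p, hap, hHp, hqp⟩ := exists_level_right hH haq hlt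
  obtain ⟨b, hb, s, hs, hsb⟩ := hA.2.2.2 p ((EReal.coe_lt_coe_iff.2 hqp.1).trans hqp.2)
  have hab : a ≤ b := not_lt.1 fun hba => (hA.pplus_le hb ha hba).not_gt
    ((EReal.coe_lt_coe_iff.2 (hap.trans_lt hs.1)).trans hsb.2)
  have hpb := lt_H_of_mem_ooUp_of_not_mem_ccMM hH hcoer hs hsb hqp (hq b hb)
  linarith [hA.antitoneOn ha hb hab]

lemma le_H_of_forall_not_mem_ccMM (hH : Continuous H) (hcoer : Coercive H)
    (hA : IsSetLimiter H A) (ha : a ∈ A) (hqa : q < a) (hq : ∀ b ∈ A, q ∉ ccMM H b) :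
    H a ≤ H q := by
  by_contra! hlt
  obtain ⟨p, hpa, hHp, hqp⟩ := exists_level_left hH hcoer hqa hlt
  obtain ⟨b, hb, s, hs, hsb⟩ := hA.2.2.1 p (hqp.1.trans hqp.2)
  have hba : b ≤ a := not_lt.1 fun hab =>
    (hA.le_pminus ha hb hab).not_gt (hsb.1.trans (hs.2.trans_le hpa))
  have hbp := H_lt_of_mem_Ioo_pminus_of_not_mem_ccMM hH hcoer hs hsb hqp (hq b hb)
  linarith [hA.antitoneOn hb ha hba]

lemma limFlux_le_of_le (hH : Continuous H) (hcoer : Coercive H) (hA : IsSetLimiter H A)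
    (ha : a ∈ A) (haq : a ≤ q) : limFlux H A q ≤ H a := by
  by_cases hq : ∃ b, b ∈ A ∧ q ∈ ccMM H b
  · obtain ⟨b, hb, hqb⟩ := hq
    rw [hA.limFlux_eq hH hcoer hb hqb]
    rcases lt_or_ge b a with hba | hab
    · have hqa : q ≤ a := EReal.coe_le_coe_iff.1 (hqb.2.trans (hA.pplus_le hb ha hba))
      have hqa : q = a := le_antisymm hqa haq
      exact (hA.H_eq_of_mem_ccMM hH hcoer hb ha hqb (hqa ▸ mem_ccMM_self hcoer a)).le
    · exact hA.antitoneOn ha hb hab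
  · push Not at hq
    rw [limFlux, dif_neg fun ⟨b, hb, hqb⟩ => hq b hb hqb]
    rcases haq.eq_or_lt with rfl | haq
    · rfl
    · exact hA.H_le_of_forall_not_mem_ccMM hH hcoer ha haq hq

lemma le_limFlux_of_le (hH : Continuous H) (hcoer : Coercive H) (hA : IsSetLimiter H A)
    (ha : a ∈ A) (hqa : q ≤ a) : H a ≤ limFlux H A q := by
  by_cases hq : ∃ b, b ∈ A ∧ q ∈ ccMM H b
  · obtain ⟨b, hb, hqb⟩ := hq
    rw [hA.limFlux_eq hH hcoer hb hqb]
    rcases lt_or_ge a b with hab | hba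
    · have hqa : q = a := le_antisymm hqa ((hA.le_pminus ha hb hab).trans hqb.1)
      exact (hA.H_eq_of_mem_ccMM hH hcoer ha hb (hqa ▸ mem_ccMM_self hcoer a) hqb).le
    · exact hA.antitoneOn hb ha hba
  · push Not at hq
    rw [limFlux, dif_neg fun ⟨b, hb, hqb⟩ => hq b hb hqb]
    rcases hqa.eq_or_lt with rfl | hqa
    · rfl
    · exact hA.le_H_of_forall_not_mem_ccMM hH hcoer ha hqa hq

lemma condS_limFlux (hH : Continuous H) (hcoer : Coercive H) (hA : IsSetLimiter H A)
    (ha : a ∈ A) (h : pminus H a < a) : CondS H (limFlux H A) a := by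
  refine ⟨h.ne, (hA.limFlux_self hH hcoer ha).ge, fun q hq ⟨r, hrq, hra⟩ => ?_⟩
  rcases le_or_gt a q with haq | hqa
  · exact hq.trans (hA.limFlux_le_of_le hH hcoer ha haq)
  rcases lt_trichotomy q r with hqr | rfl | hrq'
  · exact ((H_lt_of_mem_ooUp ⟨hqr, hrq.2⟩).trans (H_lt_of_mem_Ioo_pminus hra)).le
  · exact (H_lt_of_mem_Ioo_pminus hra).le
  · exact (H_lt_of_mem_Ioo_pminus ⟨hra.1.trans hrq', hqa⟩).le

lemma condT_limFlux (hH : Continuous H) (hcoer : Coercive H) (hA : IsSetLimiter H A)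
    (ha : a ∈ A) (h : (a : EReal) < pplus H a) : CondT H (limFlux H A) a := by
  refine ⟨h.ne, (hA.limFlux_self hH hcoer ha).le, fun q hq ⟨r, hrq, hra⟩ => ?_⟩
  rcases le_or_gt q a with hqa | haq
  · exact (hA.le_limFlux_of_le hH hcoer ha hqa).trans hq
  rcases lt_trichotomy r q with hrq' | rfl | hqr
  · exact ((H_lt_of_mem_ooUp hra).trans (H_lt_of_mem_Ioo_pminus ⟨hrq.1, hrq'⟩)).le
  · exact (H_lt_of_mem_ooUp hra).le
  · exact (H_lt_of_mem_ooUp ⟨haq, (EReal.coe_lt_coe_iff.2 hqr).trans hra.2⟩).le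

lemma mem_of_condS_limFlux (hH : Continuous H) (hcoer : Coercive H) (hA : IsSetLimiter H A)
    (hp : CondS H (limFlux H A) p) : p ∈ A := by
  obtain ⟨hne, hle, hmax⟩ := hp
  obtain ⟨a, ha, r, hr, hra⟩ := hA.2.2.1 p ((pminus_le hcoer p).lt_of_ne hne)
  have hap : H a ≤ H p := hmax a (hA.limFlux_self hH hcoer ha).ge ⟨r, hra, hr⟩
  rcases lt_trichotomy a p with hlt | rfl | hgt
  · have hpa : H p = H a := le_antisymm (hle.trans (hA.limFlux_le_of_le hH hcoer ha hlt.le)) hap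
    have har := H_lt_of_mem_ooUp ⟨(_root_.le_pminus hlt hpa.le).trans_lt hr.1, hra.2⟩
    linarith [H_lt_of_mem_Ioo_pminus hr]
  · exact ha
  · linarith [H_lt_of_mem_Ioo_pminus ⟨hra.1.trans hr.2, hgt⟩]

lemma mem_of_condT_limFlux (hH : Continuous H) (hcoer : Coercive H) (hA : IsSetLimiter H A)
    (hp : CondT H (limFlux H A) p) : p ∈ A := by
  obtain ⟨hne, hle, hmin⟩ := hp
  obtain ⟨a, ha, r, hr, hra⟩ := hA.2.2.2 p ((le_pplus H p).lt_of_ne hne)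
  have hpa : H p ≤ H a := hmin a (hA.limFlux_self hH hcoer ha).le ⟨r, hra, hr⟩
  rcases lt_trichotomy a p with hlt | rfl | hgt
  · linarith [H_lt_of_mem_ooUp ⟨hlt, (EReal.coe_lt_coe_iff.2 hr.1).trans hra.2⟩]
  · exact ha
  · have hap : H a = H p := le_antisymm ((hA.le_limFlux_of_le hH hcoer ha hgt.le).trans hle) hpa
    have hra' := H_lt_of_mem_Ioo_pminus
      ⟨hra.1, EReal.coe_lt_coe_iff.1 (hr.2.trans_le (_root_.pplus_le hgt hap.le))⟩
    linarith [H_lt_of_mem_ooUp hr]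

end IsSetLimiter

theorem stmt7 (H : ℝ → ℝ) (hH : Continuous H) (hcoer : Coercive H)
    (A : Set ℝ) (hA : IsSetLimiter H A) :
    limiterOf H (limFlux H A) = A := by
  ext p
  refine ⟨fun hp => hp.elim (hA.mem_of_condS_limFlux hH hcoer) (hA.mem_of_condT_limFlux hH hcoer),
    fun hp => ?_⟩
  rcases (pminus_le hcoer p).lt_or_eq with h | h
  · exact Or.inl (hA.condS_limFlux hH hcoer hp h)
  · have hne := hA.1 p hp
    rw [h] at hne
    exact Or.inr (hA.condT_limFlux hH hcoer hp ((le_pplus H p).lt_of_ne hne))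
end

section
/- Let F : ℝ → ℝ be of class C¹ with F'(p) < 0 for all p, F(0) = 0, F(p) → +∞ as p → −∞ and F(p) → −∞ as p → +∞. Then there exists a function φ : ℝ² → ℝ of class C¹ such that: (1) φ is superlinear, i.e. φ(t,x)/|(t,x)| → +∞ as |(t,x)| → +∞; (2) φ(0,0) = 0 and φ(t,x) > 0 for all (t,x) ≠ (0,0); (3) for all t ∈ ℝ, ∂ₜφ(t,x) + F(∂ₓφ(t,x)) ≥ 0 whenever x ≤ 0, and ∂ₜφ(t,x) + F(∂ₓφ(t,x)) ≤ 0 whenever x ≥ 0. -/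
open Set Filter Topology intervalIntegral

section ALLLEMMAS


lemma core_ineq (F G e b : ℝ → ℝ)
    (hFG : ∀ y, F (G y) = y) (hFanti : Antitone F) (hGanti : Antitone G) (hG0 : G 0 = 0)
    (he0 : ∀ s, 0 ≤ e s) (he1 : ∀ s, e s ≤ 1)
    (hC1 : ∀ s, e s * |G (-s)| ≤ 1)
    (hC2 : ∀ s, e s * (G (-(2 * |s|)) - G (2 * |s|)) ≤ 1)
    (hC3 : ∀ s r, 0 ≤ r → r ≤ 1 → e s * (G (-s) - G (r - s)) ≤ r)
    (hb0 : ∀ r, 0 ≤ r → 0 ≤ b r)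
    (hb1 : ∀ r, 1 ≤ r → 1 + r + |G (r + 1 + |G (2 * r)|)| ≤ b r) :
    ∀ s r, 0 ≤ r → -s + e s * (G (-s) - G (r - s)) ≤ F (G (r - s) - b r) := by
  intro s r hr
  have hV : 0 ≤ G (-s) - G (r - s) := by
    have := hGanti (by linarith : -s ≤ r - s); linarith
  have hFb : F (G (r - s)) ≤ F (G (r - s) - b r) := by
    apply hFanti; linarith [hb0 r hr]
  rw [hFG] at hFb
  rcases le_or_gt r 1 with h1 | h1
  · have h2 := hC3 s r hr h1
    linarith
  · -- r > 1
    rcases le_or_gt r (2 * s) with h2 | h2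
    · -- s ≥ r/2 > 0
      have hs0 : 0 < s := by linarith
      have habs : |s| = s := abs_of_pos hs0
      have hV2 : G (-s) - G (r - s) ≤ G (-(2 * |s|)) - G (2 * |s|) := by
        have h3 : G (-s) ≤ G (-(2 * |s|)) := hGanti (by rw [habs]; linarith)
        have h4 : G (2 * |s|) ≤ G (r - s) := hGanti (by rw [habs]; linarith)
        linarith
      have h5 : e s * (G (-s) - G (r - s)) ≤ e s * (G (-(2 * |s|)) - G (2 * |s|)) :=
        mul_le_mul_of_nonneg_left hV2 (he0 s)
      have h6 := hC2 s
      linarith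
    rcases le_or_gt s (-r) with h3 | h3
    · -- s ≤ -r
      have habs : |s| = -s := abs_of_neg (by linarith)
      have hV2 : G (-s) - G (r - s) ≤ G (-(2 * |s|)) - G (2 * |s|) := by
        have h4 : G (-s) ≤ G (-(2 * |s|)) := hGanti (by rw [habs]; linarith)
        have h5 : G (2 * |s|) ≤ G (r - s) := hGanti (by rw [habs]; linarith)
        linarith
      have h5 : e s * (G (-s) - G (r - s)) ≤ e s * (G (-(2 * |s|)) - G (2 * |s|)) :=
        mul_le_mul_of_nonneg_left hV2 (he0 s)
      have h6 := hC2 s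
      linarith
    · -- -r < s < r/2
      set w : ℝ := r + 1 + |G (2 * r)| with hw
      have hGrs_neg : G (r - s) ≤ 0 := by
        have := hGanti (by linarith : (0:ℝ) ≤ r - s); rw [hG0] at this; exact this
      have hG2r_le : G (2 * r) ≤ G (r - s) := hGanti (by linarith)
      have hG2r_neg : G (2 * r) ≤ 0 := le_trans hG2r_le hGrs_neg
      have habs2r : |G (2 * r)| = -G (2 * r) := abs_of_nonpos hG2r_neg
      have hwpos : 0 < w := by positivity
      have hGw_neg : G w ≤ 0 := by
        have := hGanti (le_of_lt hwpos); rw [hG0] at this; exact this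
      have habsGw : |G w| = -G w := abs_of_nonpos hGw_neg
      have hbr : 1 + r + |G w| ≤ b r := hb1 r (le_of_lt h1)
      have harg : G (r - s) - b r ≤ G w := by
        rw [habsGw] at hbr; linarith [abs_nonneg (G w)]
      have hLHS : w ≤ F (G (r - s) - b r) := by
        have := hFanti harg; rw [hFG] at this; exact this
      -- RHS bound
      have hr1 : e s * (G (-s) - G (r - s)) ≤ 1 + |G (2 * r)| := by
        have hsplit : e s * (G (-s) - G (r - s)) = e s * G (-s) + e s * (- G (r - s)) := by ring
        have hA : e s * G (-s) ≤ 1 := le_trans (le_trans (le_abs_self _)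
          (by rw [abs_mul, abs_of_nonneg (he0 s)])) (hC1 s)
        have hB : e s * (-G (r - s)) ≤ 1 * (-G (2 * r)) := by
          apply mul_le_mul (he1 s) (by linarith) (by linarith) zero_le_one
        rw [hsplit, habs2r]; linarith
      linarith


lemma exists_G (F : ℝ → ℝ) (hF : ContDiff ℝ 1 F) (hF' : ∀ p, deriv F p < 0)
    (hFbot : Tendsto F atBot atTop) (hFtop : Tendsto F atTop atBot) :
    ∃ G : ℝ → ℝ, Continuous G ∧ (∀ y, F (G y) = y) ∧ (∀ p, G (F p) = p) ∧ StrictAnti G ∧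
      (∀ y, HasDerivAt G (deriv F (G y))⁻¹ y) := by
  have hFd : Differentiable ℝ F := hF.differentiable one_ne_zero
  have hFanti : StrictAnti F := strictAnti_of_deriv_neg hF'
  set M : ℝ → ℝ := fun p => F (-p) with hM
  have hMmono : StrictMono M := fun a b h => hFanti (neg_lt_neg h)
  have hMcont : Continuous M := hF.continuous.comp continuous_neg
  have hMtop : Tendsto M atTop atTop := hFbot.comp tendsto_neg_atTop_atBot
  have hMbot : Tendsto M atBot atBot := hFtop.comp tendsto_neg_atBot_atTop
  have hMsurj : Function.Surjective M := hMcont.surjective hMtop hMbot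
  set iso := StrictMono.orderIsoOfSurjective M hMmono hMsurj with hiso
  set G : ℝ → ℝ := fun y => -(iso.symm y) with hG
  have hFG : ∀ y, F (G y) = y := by
    intro y
    have h1 : iso (iso.symm y) = y := iso.apply_symm_apply y
    have h2 : iso (iso.symm y) = M (iso.symm y) := by
      rw [hiso]; rfl
    rw [h2] at h1
    simpa [hG, hM] using h1
  have hGF : ∀ p, G (F p) = p := by
    intro p
    have h1 : iso.symm (M (-p)) = -p := by
      rw [hiso]
      exact StrictMono.orderIsoOfSurjective_symm_apply_self M hMmono hMsurj (-p)
    simp only [hG]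
    have : F p = M (-p) := by simp [hM]
    rw [this, h1, neg_neg]
  have hGanti : StrictAnti G := by
    intro a b h
    simp only [hG, neg_lt_neg_iff]
    exact (OrderIso.strictMono iso.symm) h
  have hGcont : Continuous G := continuous_neg.comp iso.symm.continuous
  refine ⟨G, hGcont, hFG, hGF, hGanti, ?_⟩
  intro y
  have h1 : HasDerivAt F (deriv F (G y)) (G y) := (hFd (G y)).hasDerivAt
  exact HasDerivAt.of_local_left_inverse hGcont.continuousAt h1 (ne_of_lt (hF' (G y)))
    (Filter.Eventually.of_forall hFG)


lemma exists_e (F G : ℝ → ℝ) (hF : ContDiff ℝ 1 F) (hF' : ∀ p, deriv F p < 0)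
    (hGcont : Continuous G) (hG0 : G 0 = 0)
    (hGderiv : ∀ y, HasDerivAt G (deriv F (G y))⁻¹ y) :
    ∃ e : ℝ → ℝ, Continuous e ∧ (∀ s, 0 < e s) ∧ (∀ s, e s ≤ 1/2) ∧
      (∀ s, e s * |G (-s)| ≤ 1) ∧
      (∀ s, e s * (G (-(2 * |s|)) - G (2 * |s|)) ≤ 1) ∧
      (∀ s r, 0 ≤ r → r ≤ 1 → e s * (G (-s) - G (r - s)) ≤ r) ∧
      (∀ s r, 0 ≤ r → r ≤ 1 → e s * (G (-s - r) - G (-s)) ≤ r) ∧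
      (∀ s, e s * |G (-s)| ≤ |s| / 2) := by
  set Gd : ℝ → ℝ := fun y => (deriv F (G y))⁻¹ with hGd
  have hGdcont : Continuous Gd := by
    apply Continuous.inv₀ ((hF.continuous_deriv le_rfl).comp hGcont)
    intro y; exact ne_of_lt (hF' (G y))
  set Θ : ℝ → ℝ := fun ξ => |G ξ| + |Gd ξ| with hΘ
  have hΘcont : Continuous Θ := (hGcont.abs).add (hGdcont.abs)
  have hΘ0 : ∀ ξ, 0 ≤ Θ ξ := fun ξ => by positivity
  set Θhat : ℝ → ℝ := fun R => sSup (Θ '' Icc (-R) R) with hΘhat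
  have hP1 : ∀ R, 0 ≤ R → ∀ ξ, |ξ| ≤ R → Θ ξ ≤ Θhat R := by
    intro R hR ξ hξ
    apply le_csSup ((isCompact_Icc).bddAbove_image hΘcont.continuousOn)
    exact mem_image_of_mem _ (abs_le.mp hξ)
  have hP2 : ∀ R R', 0 ≤ R → R ≤ R' → Θhat R ≤ Θhat R' := by
    intro R R' hR hRR'
    apply csSup_le_csSup ((isCompact_Icc).bddAbove_image hΘcont.continuousOn)
    · exact (Set.Nonempty.image _ (nonempty_Icc.mpr (by linarith)))
    · exact Set.image_mono (Icc_subset_Icc (by linarith) hRR')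
  set Θt : ℝ → ℝ := fun R => Θhat (max R 8) with hΘt
  have hΘtmono : Monotone Θt := by
    intro a b hab
    exact hP2 _ _ (le_trans (by norm_num) (le_max_right a 8)) (max_le_max hab le_rfl)
  have hΘtnn : ∀ R, 0 ≤ Θt R := by
    intro R
    have h8 : (0:ℝ) ≤ max R 8 := le_trans (by norm_num) (le_max_right R 8)
    exact le_trans (hΘ0 0) (hP1 _ h8 0 (by simpa using h8))
  set J : ℝ → ℝ := fun u => ∫ x in (0:ℝ)..u, Θt x with hJ
  have hJint : ∀ a b : ℝ, IntervalIntegrable Θt MeasureTheory.volume a b :=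
    fun a b => hΘtmono.intervalIntegrable
  have hJcont : Continuous J := intervalIntegral.continuous_primitive hJint 0
  set Z : ℝ → ℝ := fun s => 1 + (J (2*|s|+9) - J (2*|s|+8)) with hZ
  have hZcont : Continuous Z := by
    have h1 : Continuous fun s : ℝ => 2*|s|+9 :=
      ((continuous_const.mul continuous_abs).add continuous_const)
    have h2 : Continuous fun s : ℝ => 2*|s|+8 :=
      ((continuous_const.mul continuous_abs).add continuous_const)
    exact continuous_const.add ((hJcont.comp h1).sub (hJcont.comp h2))
  have hZint : ∀ s : ℝ, J (2*|s|+9) - J (2*|s|+8) = ∫ x in (2*|s|+8)..(2*|s|+9), Θt x := by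
    intro s
    rw [hJ]
    exact intervalIntegral.integral_interval_sub_left (hJint _ _) (hJint _ _)
  have hZsup : ∀ s ξ : ℝ, |ξ| ≤ 2*|s| + 8 → 1 + Θ ξ ≤ Z s := by
    intro s ξ hξ
    have h8 : (8:ℝ) ≤ 2*|s|+8 := by linarith [abs_nonneg s]
    have hconst : Θt (2*|s|+8) ≤ ∫ x in (2*|s|+8)..(2*|s|+9), Θt x := by
      have : ∫ x in (2*|s|+8)..(2*|s|+9), Θt (2*|s|+8) ≤ ∫ x in (2*|s|+8)..(2*|s|+9), Θt x := by
        apply intervalIntegral.integral_mono_on (by linarith)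
          (intervalIntegrable_const) (hJint _ _)
        intro x hx
        exact hΘtmono hx.1
      have h9 : ((2*|s|+9) - (2*|s|+8)) = (1:ℝ) := by ring
      rwa [intervalIntegral.integral_const, h9, one_smul] at this
    have hTt : Θ ξ ≤ Θt (2*|s|+8) := by
      have hmax : (2*|s|+8) ⊔ 8 = 2*|s|+8 := max_eq_left h8
      show Θ ξ ≤ Θhat ((2*|s|+8) ⊔ 8)
      rw [hmax]
      exact hP1 _ (by linarith [abs_nonneg s]) ξ hξ
    show 1 + Θ ξ ≤ 1 + (J (2*|s|+9) - J (2*|s|+8))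
    have := hZint s
    linarith
  have hZ1 : ∀ s, 1 ≤ Z s := by
    intro s
    have := hZsup s 0 (by simp; positivity)
    linarith [hΘ0 0]
  have hZpos : ∀ s, 0 < Z s := fun s => lt_of_lt_of_le one_pos (hZ1 s)
  -- MVT helper
  have hMVT : ∀ s x y : ℝ, |x| ≤ |s|+1 → |y| ≤ |s|+1 → |G x - G y| ≤ Z s * |x - y| := by
    intro s x y hx hy
    have hsub : ∀ ξ, ξ ∈ Icc (-(|s|+1)) (|s|+1) → |ξ| ≤ 2*|s|+8 := by
      intro ξ hξ
      rw [abs_le]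
      constructor <;> [linarith [hξ.1, abs_nonneg s]; linarith [hξ.2, abs_nonneg s]]
    have := Convex.norm_image_sub_le_of_norm_hasDerivWithin_le
      (f := G) (f' := Gd) (C := Z s) (s := Icc (-(|s|+1)) (|s|+1))
      (fun ξ _ => (hGderiv ξ).hasDerivWithinAt)
      (fun ξ hξ => by
        have h1 : Θ ξ ≤ Z s - 1 := by linarith [hZsup s ξ (hsub ξ hξ)]
        have h2 : |Gd ξ| ≤ Θ ξ := by rw [hΘ]; simp [abs_nonneg]
        simp only [Real.norm_eq_abs]
        linarith)
      (convex_Icc _ _) (abs_le.mp hy) (abs_le.mp hx)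
    simpa [Real.norm_eq_abs] using this
  set e : ℝ → ℝ := fun s => (2 * Z s)⁻¹ with he
  have h2Zpos : ∀ s, 0 < 2 * Z s := fun s => by linarith [hZpos s]
  have hepos : ∀ s, 0 < e s := fun s => inv_pos.mpr (h2Zpos s)
  have hehalf : ∀ s, e s ≤ 1/2 := by
    intro s
    rw [he]
    have h1 : (2:ℝ) ≤ 2 * Z s := by linarith [hZ1 s]
    calc (2 * Z s)⁻¹ ≤ 2⁻¹ := by
          apply inv_anti₀ (by norm_num) h1
      _ = 1/2 := by norm_num
  have hGabs : ∀ s ξ : ℝ, |ξ| ≤ 2*|s|+8 → |G ξ| ≤ Z s := by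
    intro s ξ hξ
    have h1 := hZsup s ξ hξ
    have h2 : |G ξ| ≤ Θ ξ := by rw [hΘ]; simp [abs_nonneg]
    linarith
  have hC1half : ∀ s, e s * |G (-s)| ≤ 1/2 := by
    intro s
    rw [he, inv_mul_le_iff₀ (h2Zpos s)]
    rw [show 2 * Z s * (1/2 : ℝ) = Z s from by ring]
    exact hGabs s (-s) (by rw [abs_neg]; linarith [abs_nonneg s])
  have hC1 : ∀ s, e s * |G (-s)| ≤ 1 := fun s => le_trans (hC1half s) (by norm_num)
  have hC2 : ∀ s, e s * (G (-(2 * |s|)) - G (2 * |s|)) ≤ 1 := by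
    intro s
    rw [he, inv_mul_le_iff₀ (h2Zpos s)]
    have h1 := hGabs s (-(2*|s|)) (by rw [abs_neg, abs_of_nonneg (by positivity : (0:ℝ) ≤ 2*|s|)]; linarith)
    have h2 := hGabs s (2*|s|) (by rw [abs_of_nonneg (by positivity : (0:ℝ) ≤ 2*|s|)]; linarith)
    have h3 : G (-(2*|s|)) - G (2*|s|) ≤ |G (-(2*|s|))| + |G (2*|s|)| := by
      have := le_abs_self (G (-(2*|s|)))
      have := neg_abs_le (G (2*|s|))
      linarith
    linarith
  have hC3m : ∀ s r, 0 ≤ r → r ≤ 1 → e s * (G (-s) - G (r - s)) ≤ r := by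
    intro s r hr0 hr1
    have h1 : |G (-s) - G (r - s)| ≤ Z s * r := by
      have := hMVT s (-s) (r - s) (by rw [abs_neg]; linarith [abs_nonneg s])
        (by
          have : |r - s| ≤ |r| + |s| := abs_sub _ _
          have : |r| = r := abs_of_nonneg hr0
          linarith [abs_sub r s, abs_nonneg s, abs_of_nonneg hr0])
      have heq : |(-s) - (r - s)| = r := by
        rw [show (-s) - (r - s) = -r by ring, abs_neg, abs_of_nonneg hr0]
      rw [heq] at this
      exact this
    rw [he, inv_mul_le_iff₀ (h2Zpos s)]
    have h2 : G (-s) - G (r - s) ≤ Z s * r := le_trans (le_abs_self _) h1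
    nlinarith [hZpos s, hZ1 s]
  have hC3p : ∀ s r, 0 ≤ r → r ≤ 1 → e s * (G (-s - r) - G (-s)) ≤ r := by
    intro s r hr0 hr1
    have h1 : |G (-s - r) - G (-s)| ≤ Z s * r := by
      have := hMVT s (-s - r) (-s)
        (by
          have h2 : |(-s) - r| ≤ |s| + r := by
            calc |(-s) - r| ≤ |(-s)| + |r| := abs_sub _ _
              _ = |s| + r := by rw [abs_neg, abs_of_nonneg hr0]
          linarith)
        (by rw [abs_neg]; linarith [abs_nonneg s])
      have heq : |(-s - r) - (-s)| = r := by
        rw [show (-s - r) - (-s) = -r by ring, abs_neg, abs_of_nonneg hr0]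
      rw [heq] at this
      exact this
    rw [he, inv_mul_le_iff₀ (h2Zpos s)]
    have h2 : G (-s - r) - G (-s) ≤ Z s * r := le_trans (le_abs_self _) h1
    nlinarith [hZpos s, hZ1 s]
  have hE3 : ∀ s, e s * |G (-s)| ≤ |s| / 2 := by
    intro s
    rcases le_or_gt 1 (|s|) with h1 | h1
    · exact le_trans (hC1half s) (by linarith)
    · have h2 : |G (-s)| ≤ Z s * |s| := by
        have := hMVT s (-s) 0 (by rw [abs_neg]; linarith [abs_nonneg s]) (by simp; linarith [abs_nonneg s])
        rw [hG0] at this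
        simpa [abs_neg] using this
      calc e s * |G (-s)| ≤ e s * (Z s * |s|) := mul_le_mul_of_nonneg_left h2 (le_of_lt (hepos s))
        _ = (2 * Z s)⁻¹ * (2 * Z s) * (|s|/2) := by rw [he]; ring
        _ = |s|/2 := by rw [inv_mul_cancel₀ (ne_of_gt (h2Zpos s)), one_mul]
  exact ⟨e, (continuous_const.mul hZcont).inv₀ (fun s => ne_of_gt (h2Zpos s)),
    hepos, hehalf, hC1, hC2, hC3m, hC3p, hE3⟩


lemma exists_sigma (e : ℝ → ℝ) (hecont : Continuous e) (hepos : ∀ s, 0 < e s)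
    (hehalf : ∀ s, e s ≤ 1/2) :
    ∃ σ : ℝ → ℝ, σ 0 = 0 ∧ StrictMono σ ∧ (∀ t, HasDerivAt σ (e (σ t)) t) ∧
      Tendsto σ atTop atTop ∧ Tendsto σ atBot atBot := by
  set g : ℝ → ℝ := fun u => (e u)⁻¹ with hg
  have hgcont : Continuous g := hecont.inv₀ (fun u => ne_of_gt (hepos u))
  have hgpos : ∀ u, 0 < g u := fun u => inv_pos.mpr (hepos u)
  have hg1 : ∀ u, 1 ≤ g u := by
    intro u
    have h1 : (1:ℝ)⁻¹ ≤ (e u)⁻¹ := inv_anti₀ (hepos u) (le_trans (hehalf u) (by norm_num))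
    simpa using h1
  set τ : ℝ → ℝ := fun s => ∫ u in (0:ℝ)..s, g u with hτ
  have hτd : ∀ s, HasDerivAt τ (g s) s := fun s => (hgcont.integral_hasStrictDerivAt 0 s).hasDerivAt
  have hτmono : StrictMono τ := by
    apply strictMono_of_deriv_pos
    intro s
    rw [(hτd s).deriv]
    exact hgpos s
  have hτcont : Continuous τ := Differentiable.continuous (fun s => (hτd s).differentiableAt)
  have hτ0 : τ 0 = 0 := intervalIntegral.integral_same
  have hτge : ∀ s : ℝ, 0 ≤ s → s ≤ τ s := by
    intro s hs
    have h1 : ∫ u in (0:ℝ)..s, (1:ℝ) ≤ ∫ u in (0:ℝ)..s, g u := by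
      apply intervalIntegral.integral_mono_on hs intervalIntegrable_const
        (hgcont.intervalIntegrable 0 s)
      intro u _
      exact hg1 u
    simpa using h1
  have hτle : ∀ s : ℝ, s ≤ 0 → τ s ≤ s := by
    intro s hs
    have h1 : ∫ u in s..(0:ℝ), (1:ℝ) ≤ ∫ u in s..(0:ℝ), g u := by
      apply intervalIntegral.integral_mono_on hs intervalIntegrable_const
        (hgcont.intervalIntegrable s 0)
      intro u _
      exact hg1 u
    have h2 : τ s = -∫ u in s..(0:ℝ), g u := by
      rw [hτ]
      exact (intervalIntegral.integral_symm s 0)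
    simp at h1
    linarith
  have hτtop : Tendsto τ atTop atTop :=
    tendsto_atTop_mono' atTop (by filter_upwards [eventually_ge_atTop (0:ℝ)] with s hs using hτge s hs) tendsto_id
  have hτbot : Tendsto τ atBot atBot :=
    tendsto_atBot_mono' atBot (by filter_upwards [eventually_le_atBot (0:ℝ)] with s hs using hτle s hs) tendsto_id
  have hτsurj : Function.Surjective τ := hτcont.surjective hτtop hτbot
  set iso := StrictMono.orderIsoOfSurjective τ hτmono hτsurj with hiso
  set σ : ℝ → ℝ := fun t => iso.symm t with hσ
  have hστ : ∀ s, σ (τ s) = s := by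
    intro s
    exact StrictMono.orderIsoOfSurjective_symm_apply_self τ hτmono hτsurj s
  have hτσ : ∀ t, τ (σ t) = t := by
    intro t
    have h1 : iso (iso.symm t) = t := iso.apply_symm_apply t
    rwa [show iso (iso.symm t) = τ (iso.symm t) from rfl] at h1
  have hσmono : StrictMono σ := fun a b h => (OrderIso.strictMono iso.symm) h
  have hσcont : Continuous σ := iso.symm.continuous
  have hσ0 : σ 0 = 0 := by have h := hστ 0; rwa [hτ0] at h
  have hσd : ∀ t, HasDerivAt σ (e (σ t)) t := by
    intro t
    have h1 : HasDerivAt σ ((g (σ t))⁻¹) t :=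
      HasDerivAt.of_local_left_inverse hσcont.continuousAt (hτd (σ t))
        (ne_of_gt (hgpos (σ t))) (Filter.Eventually.of_forall hτσ)
    simpa [hg] using h1
  refine ⟨σ, hσ0, hσmono, hσd, ?_, ?_⟩
  · rw [tendsto_atTop]
    intro b
    filter_upwards [eventually_ge_atTop (τ b)] with t ht
    have := hσmono.monotone ht
    rwa [hστ] at this
  · rw [tendsto_atBot]
    intro b
    filter_upwards [eventually_le_atBot (τ b)] with t ht
    have := hσmono.monotone ht
    rwa [hστ] at this

end ALLLEMMAS

lemma myintegral_nonpos {f : ℝ → ℝ} {a b : ℝ} (hab : a ≤ b)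
    (hf : ∀ u, u ∈ Set.Icc a b → f u ≤ 0) : ∫ u in a..b, f u ≤ 0 := by
  have h := intervalIntegral.integral_nonneg (f := fun u => -f u) (μ := MeasureTheory.volume)
    hab (fun u hu => by simpa using neg_nonneg.mpr (hf u hu))
  rw [intervalIntegral.integral_neg] at h
  linarith

set_option maxHeartbeats 2000000 in
theorem stmt10 (F : ℝ → ℝ) (hF : ContDiff ℝ 1 F) (hF' : ∀ p, deriv F p < 0)
    (hF0 : F 0 = 0) (hFbot : Tendsto F atBot atTop) (hFtop : Tendsto F atTop atBot) :
    ∃ φ : ℝ × ℝ → ℝ, ContDiff ℝ 1 φ ∧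
      Tendsto (fun z : ℝ × ℝ => φ z / ‖z‖) (cocompact (ℝ × ℝ)) atTop ∧
      φ (0, 0) = 0 ∧ (∀ z : ℝ × ℝ, z ≠ (0, 0) → 0 < φ z) ∧
      (∀ t x : ℝ, x ≤ 0 →
        0 ≤ deriv (fun s => φ (s, x)) t + F (deriv (fun y => φ (t, y)) x)) ∧
      (∀ t x : ℝ, 0 ≤ x →
        deriv (fun s => φ (s, x)) t + F (deriv (fun y => φ (t, y)) x) ≤ 0) := by
  obtain ⟨G, hGcont, hFG, hGF, hGanti, hGderiv⟩ := exists_G F hF hF' hFbot hFtop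
  have hFanti : StrictAnti F := strictAnti_of_deriv_neg hF'
  have hG0 : G 0 = 0 := by have h := hGF 0; rwa [hF0] at h
  obtain ⟨e, hecont, hepos, hehalf, hC1, hC2, hC3m, hC3p, hE3⟩ :=
    exists_e F G hF hF' hGcont hG0 hGderiv
  obtain ⟨σ, hσ0, hσmono, hσd, hσtop, hσbot⟩ := exists_sigma e hecont hepos hehalf
  have hσcont : Continuous σ := Differentiable.continuous (fun t => (hσd t).differentiableAt)
  -- K
  set K : ℝ → ℝ := fun q => ∫ u in (0:ℝ)..q, G (-u) with hK
  have hGnegcont : Continuous fun u : ℝ => G (-u) := hGcont.comp continuous_neg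
  have hKd : ∀ q, HasDerivAt K (G (-q)) q :=
    fun q => (hGnegcont.integral_hasStrictDerivAt 0 q).hasDerivAt
  have hK0 : K 0 = 0 := intervalIntegral.integral_same
  have hKnn : ∀ q, 0 ≤ K q := by
    intro q
    rcases le_or_gt 0 q with hq | hq
    · apply intervalIntegral.integral_nonneg hq
      intro u hu
      have := hGanti.antitone (neg_nonpos.mpr hu.1)
      rwa [hG0] at this
    · have h1 : ∫ u in q..(0:ℝ), G (-u) ≤ 0 := by
        apply myintegral_nonpos (le_of_lt hq)
        intro u hu
        have := hGanti.antitone (neg_nonneg.mpr hu.2)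
        rwa [hG0] at this
      have h2 : K q = -∫ u in q..(0:ℝ), G (-u) := integral_symm q 0
      linarith
  -- a
  set aF : ℝ → ℝ := fun u => σ u - e (σ u) * G (-σ u) with haF
  have haFcont : Continuous aF :=
    hσcont.sub ((hecont.comp hσcont).mul (hGcont.comp hσcont.neg))
  set a : ℝ → ℝ := fun t => ∫ u in (0:ℝ)..t, aF u with ha
  have had : ∀ t, HasDerivAt a (aF t) t :=
    fun t => (haFcont.integral_hasStrictDerivAt 0 t).hasDerivAt
  have ha0 : a 0 = 0 := intervalIntegral.integral_same
  have haF_lb : ∀ u : ℝ, 0 ≤ u → σ u / 2 ≤ aF u := by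
    intro u hu
    have hs : 0 ≤ σ u := by
      have := hσmono.monotone hu
      rwa [hσ0] at this
    have h1 : e (σ u) * G (-σ u) ≤ |σ u| / 2 := by
      calc e (σ u) * G (-σ u) ≤ |e (σ u) * G (-σ u)| := le_abs_self _
        _ = e (σ u) * |G (-σ u)| := by rw [abs_mul, abs_of_pos (hepos (σ u))]
        _ ≤ |σ u| / 2 := hE3 (σ u)
    rw [abs_of_nonneg hs] at h1
    simp only [haF]
    linarith
  have haF_ub : ∀ u : ℝ, u ≤ 0 → aF u ≤ σ u / 2 := by
    intro u hu
    have hs : σ u ≤ 0 := by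
      have := hσmono.monotone hu
      rwa [hσ0] at this
    have h1 : -(e (σ u) * G (-σ u)) ≤ |σ u| / 2 := by
      calc -(e (σ u) * G (-σ u)) ≤ |e (σ u) * G (-σ u)| := neg_le_abs _
        _ = e (σ u) * |G (-σ u)| := by rw [abs_mul, abs_of_pos (hepos (σ u))]
        _ ≤ |σ u| / 2 := hE3 (σ u)
    rw [abs_of_nonpos hs] at h1
    simp only [haF]
    linarith
  have ha_lb_pos : ∀ t : ℝ, 0 ≤ t → t * (σ (t/2) / 4) ≤ a t := by
    intro t ht
    have hsplit : (∫ u in (0:ℝ)..(t/2), aF u) + (∫ u in (t/2)..t, aF u) = a t :=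
      intervalIntegral.integral_add_adjacent_intervals (haFcont.intervalIntegrable 0 (t/2))
        (haFcont.intervalIntegrable (t/2) t)
    have h1 : 0 ≤ ∫ u in (0:ℝ)..(t/2), aF u := by
      apply intervalIntegral.integral_nonneg (by linarith)
      intro u hu
      have hs : 0 ≤ σ u := by
        have := hσmono.monotone hu.1
        rwa [hσ0] at this
      have hlb := haF_lb u hu.1
      calc (0:ℝ) ≤ σ u / 2 := by linarith
        _ ≤ aF u := hlb
    have h2 : ∫ u in (t/2)..t, (σ (t/2) / 2) ≤ ∫ u in (t/2)..t, aF u := by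
      apply intervalIntegral.integral_mono_on (by linarith) intervalIntegrable_const
        (haFcont.intervalIntegrable _ _)
      intro u hu
      have hmono : σ (t/2) ≤ σ u := hσmono.monotone hu.1
      have := haF_lb u (by linarith [hu.1])
      linarith
    rw [intervalIntegral.integral_const] at h2
    have h3 : (t - t/2) • (σ (t/2) / 2) = t * (σ (t/2) / 4) := by
      rw [smul_eq_mul]; ring
    rw [h3] at h2
    linarith
  have ha_lb_neg : ∀ t : ℝ, t ≤ 0 → t * (σ (t/2) / 4) ≤ a t := by
    intro t ht
    have hsplit : (∫ u in t..(t/2), aF u) + (∫ u in (t/2)..(0:ℝ), aF u) = ∫ u in t..(0:ℝ), aF u :=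
      intervalIntegral.integral_add_adjacent_intervals (haFcont.intervalIntegrable _ _)
        (haFcont.intervalIntegrable _ _)
    have hat : a t = -∫ u in t..(0:ℝ), aF u := integral_symm t 0
    have h1 : ∫ u in (t/2)..(0:ℝ), aF u ≤ 0 := by
      apply myintegral_nonpos (by linarith)
      intro u hu
      have hs : σ u ≤ 0 := by
        have := hσmono.monotone hu.2
        rwa [hσ0] at this
      have hub := haF_ub u hu.2
      calc aF u ≤ σ u / 2 := hub
        _ ≤ 0 := by linarith
    have h2 : ∫ u in t..(t/2), aF u ≤ ∫ u in t..(t/2), (σ (t/2) / 2) := by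
      apply intervalIntegral.integral_mono_on (by linarith) (haFcont.intervalIntegrable _ _)
        intervalIntegrable_const
      intro u hu
      have hmono : σ u ≤ σ (t/2) := hσmono.monotone hu.2
      have := haF_ub u (by linarith [hu.2])
      linarith
    rw [intervalIntegral.integral_const] at h2
    have h3 : (t/2 - t) • (σ (t/2) / 2) = -(t * (σ (t/2) / 4)) := by
      rw [smul_eq_mul]; ring
    rw [h3] at h2
    linarith
  have hann : ∀ t, 0 ≤ a t := by
    intro t
    rcases le_or_gt 0 t with ht | ht
    · have hs : 0 ≤ σ (t/2) := by
        have := hσmono.monotone (by linarith : (0:ℝ) ≤ t/2)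
        rwa [hσ0] at this
      have := ha_lb_pos t ht
      nlinarith
    · have hs : σ (t/2) ≤ 0 := by
        have := hσmono.monotone (by linarith : t/2 ≤ (0:ℝ))
        rwa [hσ0] at this
      have := ha_lb_neg t (le_of_lt ht)
      nlinarith
  have hapos : ∀ t : ℝ, t ≠ 0 → 0 < a t := by
    intro t ht
    rcases lt_or_gt_of_ne ht with h | h
    · have hs : σ (t/2) < 0 := by
        have := hσmono (by linarith : t/2 < (0:ℝ))
        rwa [hσ0] at this
      have := ha_lb_neg t (le_of_lt h)
      nlinarith
    · have hs : 0 < σ (t/2) := by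
        have := hσmono (by linarith : (0:ℝ) < t/2)
        rwa [hσ0] at this
      have := ha_lb_pos t (le_of_lt h)
      nlinarith
  -- B
  set Pm : ℝ → ℝ := fun r => |G (r + 1 + |G (2*r)|)| with hPm
  set Pp : ℝ → ℝ := fun r => |G (-(r + 1 + |G (-(2*r))|))| with hPp
  have hPmcont : Continuous Pm := by
    apply Continuous.abs
    apply hGcont.comp
    exact (continuous_id.add continuous_const).add
      ((hGcont.comp (continuous_const.mul continuous_id)).abs)
  have hPpcont : Continuous Pp := by
    apply Continuous.abs
    apply hGcont.comp
    apply Continuous.neg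
    exact (continuous_id.add continuous_const).add
      ((hGcont.comp ((continuous_const.mul continuous_id).neg)).abs)
  set Bd : ℝ → ℝ := fun x => x * (1 + |x| + Pm |x| + Pp |x|) with hBdd
  have hBdcont : Continuous Bd :=
    continuous_id.mul (((continuous_const.add continuous_abs).add
      (hPmcont.comp continuous_abs)).add (hPpcont.comp continuous_abs))
  set B : ℝ → ℝ := fun x => ∫ u in (0:ℝ)..x, Bd u with hB
  have hBd : ∀ x, HasDerivAt B (Bd x) x :=
    fun x => (hBdcont.integral_hasStrictDerivAt 0 x).hasDerivAt
  have hB0 : B 0 = 0 := intervalIntegral.integral_same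
  have hBd_ge_id : ∀ u : ℝ, 0 ≤ u → u ≤ Bd u := by
    intro u hu
    simp only [hBdd]
    nlinarith [abs_nonneg u, abs_nonneg (G (|u| + 1 + |G (2*|u|)|)),
      abs_nonneg (G (-(|u| + 1 + |G (-(2*|u|))|)))]
  have hBd_le_id : ∀ u : ℝ, u ≤ 0 → Bd u ≤ u := by
    intro u hu
    simp only [hBdd]
    nlinarith [abs_nonneg u, abs_nonneg (G (|u| + 1 + |G (2*|u|)|)),
      abs_nonneg (G (-(|u| + 1 + |G (-(2*|u|))|)))]
  have hBlb : ∀ x : ℝ, x^2/2 ≤ B x := by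
    intro x
    rcases le_or_gt 0 x with hx | hx
    · have h1 : ∫ u in (0:ℝ)..x, u ≤ ∫ u in (0:ℝ)..x, Bd u := by
        apply intervalIntegral.integral_mono_on hx (intervalIntegral.intervalIntegrable_id)
          (hBdcont.intervalIntegrable _ _)
        intro u hu
        exact hBd_ge_id u hu.1
      rw [integral_id] at h1
      simp only [hB]
      linarith
    · have h1 : ∫ u in x..(0:ℝ), Bd u ≤ ∫ u in x..(0:ℝ), u := by
        apply intervalIntegral.integral_mono_on (le_of_lt hx)
          (hBdcont.intervalIntegrable _ _) (intervalIntegral.intervalIntegrable_id)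
        intro u hu
        exact hBd_le_id u hu.2
      rw [integral_id] at h1
      have h2 : B x = -∫ u in x..(0:ℝ), Bd u := integral_symm x 0
      rw [h2]
      linarith
  have hBnn : ∀ x, 0 ≤ B x := fun x => le_trans (by positivity) (hBlb x)
  -- b functions for the core inequality
  set bm : ℝ → ℝ := fun r => r * (1 + r + Pm r) with hbm
  set bp : ℝ → ℝ := fun r => r * (1 + r + Pp r) with hbp
  have hPmnn : ∀ r, 0 ≤ Pm r := fun r => abs_nonneg _
  have hPpnn : ∀ r, 0 ≤ Pp r := fun r => abs_nonneg _
  -- core inequality, minus side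
  have hcore1 : ∀ s r : ℝ, 0 ≤ r →
      -s + e s * (G (-s) - G (r - s)) ≤ F (G (r - s) - bm r) := by
    apply core_ineq F G e bm hFG hFanti.antitone hGanti.antitone hG0
      (fun s => le_of_lt (hepos s)) (fun s => le_trans (hehalf s) (by norm_num))
      hC1 hC2 hC3m
    · intro r hr
      have := hPmnn r
      simp only [hbm]
      nlinarith
    · intro r hr
      have := hPmnn r
      simp only [hbm, hPm]
      nlinarith
  -- core inequality, plus side (mirrored)
  have hcore2 : ∀ s r : ℝ, 0 ≤ r →
      -s + (fun s => e (-s)) s * ((fun y => -G (-y)) (-s) - (fun y => -G (-y)) (r - s)) ≤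
        (fun p => -F (-p)) ((fun y => -G (-y)) (r - s) - bp r) := by
    apply core_ineq (fun p => -F (-p)) (fun y => -G (-y)) (fun s => e (-s)) bp
    · intro y
      show -F (-(-G (-y))) = y
      rw [neg_neg, hFG, neg_neg]
    · intro u v huv
      simp only
      exact neg_le_neg (hFanti.antitone (neg_le_neg huv))
    · intro u v huv
      simp only
      exact neg_le_neg (hGanti.antitone (neg_le_neg huv))
    · simp [hG0]
    · intro s; exact le_of_lt (hepos (-s))
    · intro s; exact le_trans (hehalf (-s)) (by norm_num)
    · intro s
      simp only [neg_neg, abs_neg]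
      have h := hC1 (-s)
      rwa [neg_neg] at h
    · intro s
      have h := hC2 (-s)
      rw [abs_neg] at h
      simp only [neg_neg]
      calc e (-s) * (-G (2*|s|) - -G (-(2*|s|))) = e (-s) * (G (-(2*|s|)) - G (2*|s|)) := by ring
        _ ≤ 1 := h
    · intro s r hr0 hr1
      have h := hC3p (-s) r hr0 hr1
      rw [neg_neg] at h
      show (fun s => e (-s)) s * (-G (-(-s)) - -G (-(r - s))) ≤ r
      simp only [neg_neg]
      rw [show -(r - s) = s - r by ring]
      linarith [h]
    · intro r hr
      have := hPpnn r
      simp only [hbp]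
      nlinarith
    · intro r hr
      simp only [hbp, hPp, abs_neg]
      nlinarith [abs_nonneg (G (-(r + 1 + |G (-(2*r))|)))]
  -- φ
  set φ : ℝ × ℝ → ℝ := fun z => K (z.2 + σ z.1) + (B z.2 + a z.1) with hφ
  -- C¹
  have hKC1 : ContDiff ℝ 1 K := by
    rw [contDiff_one_iff_deriv]
    refine ⟨fun q => (hKd q).differentiableAt, ?_⟩
    have : deriv K = fun q => G (-q) := funext fun q => (hKd q).deriv
    rw [this]
    exact hGnegcont
  have hσC1 : ContDiff ℝ 1 σ := by
    rw [contDiff_one_iff_deriv]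
    refine ⟨fun t => (hσd t).differentiableAt, ?_⟩
    have : deriv σ = fun t => e (σ t) := funext fun t => (hσd t).deriv
    rw [this]
    exact hecont.comp hσcont
  have haC1 : ContDiff ℝ 1 a := by
    rw [contDiff_one_iff_deriv]
    refine ⟨fun t => (had t).differentiableAt, ?_⟩
    have : deriv a = aF := funext fun t => (had t).deriv
    rw [this]
    exact haFcont
  have hBC1 : ContDiff ℝ 1 B := by
    rw [contDiff_one_iff_deriv]
    refine ⟨fun x => (hBd x).differentiableAt, ?_⟩
    have : deriv B = Bd := funext fun x => (hBd x).deriv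
    rw [this]
    exact hBdcont
  have hφC1 : ContDiff ℝ 1 φ := by
    apply ContDiff.add
    · exact hKC1.comp (contDiff_snd.add (hσC1.comp contDiff_fst))
    · exact (hBC1.comp contDiff_snd).add (haC1.comp contDiff_fst)
  -- partial derivatives
  have hdt : ∀ t x : ℝ, HasDerivAt (fun s => φ (s, x))
      (G (-(x + σ t)) * e (σ t) + aF t) t := by
    intro t x
    have h1 : HasDerivAt (fun s => x + σ s) (e (σ t)) t := by
      exact (hσd t).const_add x
    have h2 : HasDerivAt (fun s => K (x + σ s)) (G (-(x + σ t)) * e (σ t)) t :=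
      by have := (hKd (x + σ t)).comp t h1; exact this
    have h3 : HasDerivAt (fun s => B x + a s) (aF t) t := by
      exact (had t).const_add (B x)
    exact h2.add h3
  have hdx : ∀ t x : ℝ, HasDerivAt (fun y => φ (t, y))
      (G (-(x + σ t)) + Bd x) x := by
    intro t x
    have h1 : HasDerivAt (fun y : ℝ => y + σ t) 1 x := by
      exact (hasDerivAt_id' x).add_const (σ t)
    have h2 : HasDerivAt (fun y => K (y + σ t)) (G (-(x + σ t))) x := by
      have := (hKd (x + σ t)).comp x h1
      rw [mul_one] at this
      exact this
    have h3 : HasDerivAt (fun y => B y + a t) (Bd x) x := by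
      exact (hBd x).add_const (a t)
    exact h2.add h3
  refine ⟨φ, hφC1, ?_, ?_, ?_, ?_, ?_⟩
  · -- superlinearity
    set ψ : ℝ → ℝ := fun R => min (min (a R) (a (-R))) (R^2/2) with hψdef
    have hminor : ∀ z : ℝ × ℝ, ψ ‖z‖ ≤ φ z := by
      rintro ⟨t, x⟩
      have hKnn' := hKnn (x + σ t)
      have hBnn' := hBnn x
      have hann' := hann t
      have hBlb' := hBlb x
      have hnorm : ‖((t, x) : ℝ × ℝ)‖ = max |t| |x| := by
        rw [Prod.norm_def, Real.norm_eq_abs, Real.norm_eq_abs]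
      have hφval : φ (t, x) = K (x + σ t) + (B x + a t) := rfl
      rw [hnorm, hφval]
      rcases max_cases |t| |x| with ⟨h1, h2⟩ | ⟨h1, h2⟩ <;> rw [h1]
      · have hmin1 : ψ |t| ≤ min (a |t|) (a (-|t|)) := min_le_left _ _
        rcases abs_cases t with ⟨h3, _⟩ | ⟨h3, _⟩
        · have : min (a |t|) (a (-|t|)) ≤ a t := by rw [h3]; exact min_le_left _ _
          have h4 := le_trans hmin1 this
          linarith
        · have : min (a |t|) (a (-|t|)) ≤ a t := by
            rw [show -|t| = t by rw [h3]; ring]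
            exact min_le_right _ _
          have h4 := le_trans hmin1 this
          linarith
      · have hmin2 : ψ |x| ≤ |x|^2/2 := min_le_right _ _
        rw [sq_abs] at hmin2
        linarith
    have htend : Tendsto (fun R => ψ R / R) atTop atTop := by
      have hhalf : Tendsto (fun R : ℝ => R/2) atTop atTop :=
        tendsto_id.atTop_div_const (by norm_num)
      have h1 : Tendsto (fun R : ℝ => σ (R/2) / 4) atTop atTop :=
        (hσtop.comp hhalf).atTop_div_const (by norm_num)
      have hneghalf : Tendsto (fun R : ℝ => -R/2) atTop atBot := by
        exact (tendsto_neg_atTop_atBot : Tendsto (fun x : ℝ => -x) atTop atBot).atBot_div_const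
          (by norm_num : (0:ℝ) < 2)
      have h2 : Tendsto (fun R : ℝ => -(σ (-R/2)) / 4) atTop atTop := by
        have hb : Tendsto (fun R : ℝ => σ (-R/2)) atTop atBot := hσbot.comp hneghalf
        exact (tendsto_neg_atBot_atTop.comp hb).atTop_div_const (by norm_num)
      rw [tendsto_atTop]
      intro C
      filter_upwards [h1.eventually_ge_atTop C, h2.eventually_ge_atTop C,
        eventually_ge_atTop (1 + 2*|C|)] with R e1 e2 eR
      have hR1 : (1:ℝ) ≤ R := by linarith [abs_nonneg C]
      have hRpos : (0:ℝ) < R := by linarith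
      rw [le_div_iff₀ hRpos]
      have hA : C * R ≤ a R := by
        have hlb := ha_lb_pos R (by linarith)
        have : C * R ≤ R * (σ (R/2) / 4) := by nlinarith
        linarith
      have hB2 : C * R ≤ a (-R) := by
        have hlb := ha_lb_neg (-R) (by linarith)
        have heq : (-R) * (σ (-R/2) / 4) = R * (-(σ (-R/2)) / 4) := by ring
        rw [heq] at hlb
        have : C * R ≤ R * (-(σ (-R/2)) / 4) := by nlinarith
        linarith
      have hC' : C * R ≤ R^2/2 := by
        have hCabs : C ≤ |C| := le_abs_self C
        nlinarith
      exact le_min (le_min hA hB2) hC'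
    have hnormtend : Tendsto (fun z : ℝ × ℝ => ‖z‖) (cocompact (ℝ × ℝ)) atTop :=
      tendsto_norm_cocompact_atTop
    have hcomp : Tendsto (fun z : ℝ × ℝ => ψ ‖z‖ / ‖z‖) (cocompact (ℝ × ℝ)) atTop :=
      htend.comp hnormtend
    apply tendsto_atTop_mono' (cocompact (ℝ × ℝ)) ?_ hcomp
    filter_upwards [hnormtend.eventually_ge_atTop 1] with z hz
    have hzpos : (0:ℝ) < ‖z‖ := lt_of_lt_of_le one_pos hz
    exact (div_le_div_iff_of_pos_right hzpos).mpr (hminor z)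
  · -- φ (0,0) = 0
    simp only [hφ, hσ0]
    rw [add_zero, hK0, hB0, ha0]
    ring
  · -- positivity
    intro z hz
    have hK' := hKnn (z.2 + σ z.1)
    have hB' := hBnn z.2
    by_cases ht : z.1 = 0
    · have hx : z.2 ≠ 0 := by
        intro hx
        exact hz (Prod.ext ht hx)
      have h1 : 0 < z.2^2/2 := by positivity
      have := hBlb z.2
      have := hann z.1
      simp only [hφ]
      nlinarith
    · have := hapos z.1 ht
      simp only [hφ]
      nlinarith
  · -- x ≤ 0 side
    intro t x hx
    rw [(hdt t x).deriv, (hdx t x).deriv]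
    have hc := hcore1 (σ t) (-x) (by linarith)
    rw [show -x - σ t = -(x + σ t) by ring] at hc
    have hBdle : Bd x ≤ -(bm (-x)) := by
      simp only [hBdd, hbm, abs_of_nonpos hx]
      nlinarith [hPpnn (-x), hPmnn (-x)]
    have hFm : F (G (-(x + σ t)) - bm (-x)) ≤ F (G (-(x + σ t)) + Bd x) :=
      hFanti.antitone (by linarith)
    simp only [haF] at *
    linarith
  · -- x ≥ 0 side
    intro t x hx
    rw [(hdt t x).deriv, (hdx t x).deriv]
    have hc := hcore2 (-(σ t)) x hx
    simp only [neg_neg] at hc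
    rw [show x - -σ t = x + σ t by ring] at hc
    have hc' : σ t + e (σ t) * (G (-(x + σ t)) - G (-σ t)) ≤ -F (G (-(x + σ t)) + bp x) := by
      have h1 : -(-G (-(x + σ t)) - bp x) = G (-(x + σ t)) + bp x := by ring
      rw [h1] at hc
      linarith [hc]
    have hBdge : bp x ≤ Bd x := by
      simp only [hBdd, hbp, abs_of_nonneg hx]
      nlinarith [hPpnn x, hPmnn x]
    have hFm : F (G (-(x + σ t)) + Bd x) ≤ F (G (-(x + σ t)) + bp x) :=
      hFanti.antitone (by linarith)
    simp only [haF] at *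
    linarith
end

section
/- Let F : ℝ → ℝ be of class C¹ with F' < 0 everywhere, F(0) = 0, F(p) → +∞ as p → −∞ and F(p) → −∞ as p → +∞, and let G : ℝ → ℝ be admissible for F. Then there exists a C¹ function E : ℝ → ℝ solving the ODE E'(t) = 1/G(−2F(E(t))) with E(0) = 0, and any such solution satisfies E'(t) > 0 for all t, E(t) → −∞ as t → −∞, E(t) → +∞ as t → +∞, and E'(t) → 0 as t → ±∞. -/
/-!
Writing `g(x) = G(−2F(x))`, the ODE is autonomous, `E' = 1 / g(E)`, and is solved by separation of
variables: `E` is the inverse of the primitive `H(x) = ∫₀ˣ g`. Admissibility gives `g ≥ G(0) > 0`, so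
`H` is an increasing bijection of `ℝ` and `E = H⁻¹` is a C¹ solution. Conversely `(H ∘ E)' = 1` for
any solution, so every solution is `H⁻¹`; in particular it is increasing onto `ℝ`. Finally `G` dominates
the inverse of `−2F`, hence tends to `+∞` at both ends (being even), and `E' = 1 / G(−2F(E))` tends to `0`.
-/

open Set Filter Topology

/-- `F⁻¹`, the inverse of the decreasing bijection `F`. -/
noncomputable def Finv (F : ℝ → ℝ) : ℝ → ℝ := Function.invFun F

/-- `G` is admissible for `F`: it is continuous, even, dominates
`max((−F⁻¹)', (−2F)⁻¹) > 0`, non-increasing on `(-∞,0]` and non-decreasing on `[0,∞)`. -/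
def Admissible (F G : ℝ → ℝ) : Prop :=
  Continuous G ∧
  (∀ x : ℝ, 0 < max (deriv (fun y => -(Finv F y)) x)
      (Function.invFun (fun p => -2 * F p) x)) ∧
  (∀ x : ℝ, max (deriv (fun y => -(Finv F y)) x)
      (Function.invFun (fun p => -2 * F p) x) ≤ G x) ∧
  (∀ t : ℝ, G (-t) = G t) ∧
  AntitoneOn G (Iic 0) ∧ MonotoneOn G (Ici 0)

/-- `ψ(t,x) = −F⁻¹(x E'(t) − F(E(t))) − E(t)`. -/
noncomputable def psi (F E : ℝ → ℝ) (t x : ℝ) : ℝ :=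
  -(Finv F (x * deriv E t - F (E t))) - E t

/-- `ψ₁(x) = sup_t ψ(t,x)` (in the extended reals). -/
noncomputable def psi1 (F E : ℝ → ℝ) (x : ℝ) : EReal :=
  ⨆ t : ℝ, (psi F E t x : EReal)

/-- `ψ₂(x) = inf_t ψ(t,x)` (in the extended reals). -/
noncomputable def psi2 (F E : ℝ → ℝ) (x : ℝ) : EReal :=
  ⨅ t : ℝ, (psi F E t x : EReal)

theorem StrictMono.tendsto_invFun_atTop {α β : Type*} [LinearOrder α] [Nonempty α] [Preorder β]
    {φ : α → β} (hφ : StrictMono φ) (hsurj : Function.Surjective φ) :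
    Tendsto (Function.invFun φ) atTop atTop :=
  Filter.tendsto_atTop.2 fun M => (eventually_ge_atTop (φ M)).mono fun x hx =>
    hφ.le_iff_le.1 <| (Function.rightInverse_invFun hsurj x).symm ▸ hx

section AutonomousODE

variable {g : ℝ → ℝ} {c : ℝ}

theorem hasDerivAt_integral_of_continuous (hg : Continuous g) (x : ℝ) :
    HasDerivAt (fun x => ∫ s in (0 : ℝ)..x, g s) (g x) x :=
  (hg.integral_hasStrictDerivAt 0 x).hasDerivAt

theorem strictMono_integral_of_pos (hg : Continuous g) (hpos : ∀ x, 0 < g x) :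
    StrictMono fun x => ∫ s in (0 : ℝ)..x, g s :=
  strictMono_of_deriv_pos fun x => (hasDerivAt_integral_of_continuous hg x).deriv ▸ hpos x

theorem monotone_integral_sub_mul (hg : Continuous g) (hgc : ∀ x, c ≤ g x) :
    Monotone fun x => (∫ s in (0 : ℝ)..x, g s) - c * x := by
  have hd : ∀ x, HasDerivAt (fun x => (∫ s in (0 : ℝ)..x, g s) - c * x) (g x - c) x := fun x => by
    simpa using (hasDerivAt_integral_of_continuous hg x).fun_sub ((hasDerivAt_id x).const_mul c)
  exact monotone_of_deriv_nonneg (fun x => (hd x).differentiableAt)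
    fun x => (hd x).deriv ▸ sub_nonneg.2 (hgc x)

theorem surjective_integral_of_le (hg : Continuous g) (hc : 0 < c) (hgc : ∀ x, c ≤ g x) :
    Function.Surjective fun x => ∫ s in (0 : ℝ)..x, g s := by
  have hmono := monotone_integral_sub_mul hg hgc
  have hzero : (∫ s in (0 : ℝ)..0, g s) - c * 0 = 0 := by simp
  refine Continuous.surjective
    (intervalIntegral.continuous_primitive (fun _ _ => hg.intervalIntegrable _ _) 0) ?_ ?_
  · refine tendsto_atTop_mono' _ ?_ (tendsto_id.const_mul_atTop hc)
    filter_upwards [eventually_ge_atTop 0] with x hx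
    simpa [hzero] using hmono hx
  · refine tendsto_atBot_mono' _ ?_ (tendsto_id.const_mul_atBot hc)
    filter_upwards [eventually_le_atBot 0] with x hx
    simpa [hzero] using hmono hx

noncomputable def integralOrderIso (hg : Continuous g) (hc : 0 < c) (hgc : ∀ x, c ≤ g x) :
    ℝ ≃o ℝ :=
  StrictMono.orderIsoOfSurjective _ (strictMono_integral_of_pos hg fun x => hc.trans_le (hgc x))
    (surjective_integral_of_le hg hc hgc)

variable (hg : Continuous g) (hc : 0 < c) (hgc : ∀ x, c ≤ g x)

theorem integralOrderIso_apply (x : ℝ) :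
    integralOrderIso hg hc hgc x = ∫ s in (0 : ℝ)..x, g s :=
  rfl

theorem integralOrderIso_symm_zero : (integralOrderIso hg hc hgc).symm 0 = 0 := by
  rw [OrderIso.symm_apply_eq, integralOrderIso_apply, intervalIntegral.integral_same]

theorem hasDerivAt_integralOrderIso_symm (t : ℝ) :
    HasDerivAt (integralOrderIso hg hc hgc).symm (g ((integralOrderIso hg hc hgc).symm t))⁻¹ t :=
  HasDerivAt.of_local_left_inverse (integralOrderIso hg hc hgc).symm.continuous.continuousAt
    (hasDerivAt_integral_of_continuous hg _) (hc.trans_le (hgc _)).ne'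
    (Eventually.of_forall (integralOrderIso hg hc hgc).apply_symm_apply)

theorem deriv_integralOrderIso_symm :
    deriv (integralOrderIso hg hc hgc).symm = fun t => 1 / g ((integralOrderIso hg hc hgc).symm t) :=
  funext fun t => by rw [(hasDerivAt_integralOrderIso_symm hg hc hgc t).deriv, one_div]

theorem contDiff_integralOrderIso_symm : ContDiff ℝ 1 (integralOrderIso hg hc hgc).symm := by
  rw [contDiff_one_iff_deriv, deriv_integralOrderIso_symm]
  exact ⟨fun t => (hasDerivAt_integralOrderIso_symm hg hc hgc t).differentiableAt,
    continuous_const.div (hg.comp (integralOrderIso hg hc hgc).symm.continuous)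
      fun t => (hc.trans_le (hgc _)).ne'⟩

theorem eq_integralOrderIso_symm {E : ℝ → ℝ} (hE : Differentiable ℝ E) (hE0 : E 0 = 0)
    (hode : ∀ t, deriv E t = 1 / g (E t)) : E = (integralOrderIso hg hc hgc).symm := by
  have hd : ∀ t, HasDerivAt (fun t => (∫ s in (0 : ℝ)..E t, g s) - t) 0 t := fun t => by
    have hchain := (hasDerivAt_integral_of_continuous hg (E t)).comp t (hE t).hasDerivAt
    rw [hode t, mul_one_div_cancel (hc.trans_le (hgc _)).ne'] at hchain
    simpa using hchain.fun_sub (hasDerivAt_id t)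
  funext t
  have hconst := is_const_of_deriv_eq_zero (fun t => (hd t).differentiableAt)
    (fun t => (hd t).deriv) t 0
  rw [OrderIso.eq_symm_apply, integralOrderIso_apply]
  simpa [hE0, sub_eq_zero] using hconst

end AutonomousODE

namespace Admissible

variable {F G : ℝ → ℝ}

theorem pos (hG : Admissible F G) (x : ℝ) : 0 < G x :=
  (hG.2.1 x).trans_le (hG.2.2.1 x)

theorem apply_zero_le (hG : Admissible F G) (x : ℝ) : G 0 ≤ G x := by
  rcases le_total x 0 with hx | hx
  · exact hG.2.2.2.2.1 hx self_mem_Iic hx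
  · exact hG.2.2.2.2.2 self_mem_Ici hx hx

theorem tendsto_atTop (hG : Admissible F G) (hφ : StrictMono fun p => -2 * F p)
    (hsurj : Function.Surjective fun p => -2 * F p) : Tendsto G atTop atTop :=
  tendsto_atTop_mono (fun x => (le_max_right _ _).trans (hG.2.2.1 x))
    (hφ.tendsto_invFun_atTop hsurj)

theorem tendsto_atBot (hG : Admissible F G) (htop : Tendsto G atTop atTop) :
    Tendsto G atBot atTop :=
  (htop.comp tendsto_neg_atBot_atTop).congr fun t => hG.2.2.2.1 t

end Admissible

theorem stmt11_general (F G : ℝ → ℝ) (hF : ContDiff ℝ 1 F) (hF' : ∀ p, deriv F p < 0)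
    (hFbot : Tendsto F atBot atTop) (hFtop : Tendsto F atTop atBot)
    (hG : Admissible F G) :
    (∃ E : ℝ → ℝ, ContDiff ℝ 1 E ∧ E 0 = 0 ∧
      ∀ t : ℝ, deriv E t = 1 / G (-2 * F (E t))) ∧
    (∀ E : ℝ → ℝ, ContDiff ℝ 1 E → E 0 = 0 →
      (∀ t : ℝ, deriv E t = 1 / G (-2 * F (E t))) →
      (∀ t : ℝ, 0 < deriv E t) ∧
      Tendsto E atBot atBot ∧ Tendsto E atTop atTop ∧
      Tendsto (deriv E) atBot (𝓝 0) ∧ Tendsto (deriv E) atTop (𝓝 0)) := by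
  have hφtop : Tendsto (fun p => -2 * F p) atTop atTop := hFtop.const_mul_atBot_of_neg (by norm_num)
  have hφbot : Tendsto (fun p => -2 * F p) atBot atBot := hFbot.const_mul_atTop_of_neg (by norm_num)
  have hφc : Continuous fun p => -2 * F p := continuous_const.mul hF.continuous
  have hGtop := hG.tendsto_atTop ((strictAnti_of_deriv_neg hF').const_mul_of_neg (by norm_num))
    (hφc.surjective hφtop hφbot)
  have hGbot := hG.tendsto_atBot hGtop
  have hg : Continuous fun s => G (-2 * F s) := hG.1.comp hφc
  set e := integralOrderIso hg (hG.pos 0) fun s => hG.apply_zero_le _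
  have hde : deriv e.symm = fun t => 1 / G (-2 * F (e.symm t)) := deriv_integralOrderIso_symm ..
  refine ⟨⟨e.symm, contDiff_integralOrderIso_symm .., integralOrderIso_symm_zero .., congrFun hde⟩,
    fun E hE hE0 hode => ?_⟩
  obtain rfl : E = e.symm := eq_integralOrderIso_symm _ _ _ (hE.differentiable one_ne_zero) hE0 hode
  refine ⟨fun t => hode t ▸ one_div_pos.2 (hG.pos _), e.symm.tendsto_atBot, e.symm.tendsto_atTop,
    ?_, ?_⟩ <;> simp only [hde, one_div]
  · exact (hGbot.comp (hφbot.comp e.symm.tendsto_atBot)).inv_tendsto_atTop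
  · exact (hGtop.comp (hφtop.comp e.symm.tendsto_atTop)).inv_tendsto_atTop

theorem stmt11 (F G : ℝ → ℝ) (hF : ContDiff ℝ 1 F) (hF' : ∀ p, deriv F p < 0)
    (hF0 : F 0 = 0) (hFbot : Tendsto F atBot atTop) (hFtop : Tendsto F atTop atBot)
    (hG : Admissible F G) :
    (∃ E : ℝ → ℝ, ContDiff ℝ 1 E ∧ E 0 = 0 ∧
      ∀ t : ℝ, deriv E t = 1 / G (-2 * F (E t))) ∧
    (∀ E : ℝ → ℝ, ContDiff ℝ 1 E → E 0 = 0 →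
      (∀ t : ℝ, deriv E t = 1 / G (-2 * F (E t))) →
      (∀ t : ℝ, 0 < deriv E t) ∧
      Tendsto E atBot atBot ∧ Tendsto E atTop atTop ∧
      Tendsto (deriv E) atBot (𝓝 0) ∧ Tendsto (deriv E) atTop (𝓝 0)) :=
  stmt11_general F G hF hF' hFbot hFtop hG
end

section
/- Let F : ℝ → ℝ be of class C¹ with F' < 0 everywhere, F(0) = 0, F(p) → +∞ as p → −∞ and F(p) → −∞ as p → +∞. Then there exists a function G : ℝ → ℝ admissible for F; moreover, every function G admissible for F satisfies G(x) → +∞ as x → ±∞. -/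
open Set Filter Topology

theorem stmt12 (F : ℝ → ℝ) (hF : ContDiff ℝ 1 F) (hF' : ∀ p, deriv F p < 0)
    (hF0 : F 0 = 0) (hFbot : Tendsto F atBot atTop) (hFtop : Tendsto F atTop atBot) :
    (∃ G : ℝ → ℝ, Admissible F G) ∧
    (∀ G : ℝ → ℝ, Admissible F G →
      Tendsto G atTop atTop ∧ Tendsto G atBot atTop) := by
  have hFc : Continuous F := hF.continuous
  have hanti : StrictAnti F := strictAnti_of_deriv_neg hF'
  have hinj : Function.Injective F := hanti.injective
  have hsurj : Function.Surjective F := hFc.surjective' hFbot hFtop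
  have hFinvR : ∀ y, F (Finv F y) = y := fun y => Function.rightInverse_invFun hsurj y
  -- continuity of Finv F
  have hnegmono : StrictMono (fun x => -F x) := fun a b hab => by simpa using hanti hab
  have hnegsurj : Function.Surjective (fun x => -F x) := by
    intro y; obtain ⟨x, hx⟩ := hsurj (-y); exact ⟨x, by simp [hx]⟩
  set e : ℝ ≃o ℝ := StrictMono.orderIsoOfSurjective _ hnegmono hnegsurj with he
  have hecoe : ∀ x, e x = -F x := fun x => by
    rw [he, StrictMono.coe_orderIsoOfSurjective]
  have hFinv_eq : Finv F = fun y => e.symm (-y) := by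
    funext y
    apply hinj
    rw [hFinvR]
    have h1 := hecoe (e.symm (-y))
    rw [e.apply_symm_apply] at h1
    linarith
  have hFinvc : Continuous (Finv F) := by
    rw [hFinv_eq]; exact e.symm.continuous.comp continuous_neg
  -- derivative of -Finv
  set A : ℝ → ℝ := fun x => -(deriv F (Finv F x))⁻¹ with hAdef
  have hA : ∀ x, HasDerivAt (fun y => -(Finv F y)) (A x) x := by
    intro x
    have hd : HasDerivAt F (deriv F (Finv F x)) (Finv F x) :=
      ((hF.differentiable one_ne_zero) (Finv F x)).hasDerivAt
    have h1 := HasDerivAt.of_local_left_inverse hFinvc.continuousAt hd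
      (ne_of_lt (hF' _)) (Filter.Eventually.of_forall hFinvR)
    exact h1.neg
  have hderivA : deriv (fun y => -(Finv F y)) = A := funext fun x => (hA x).deriv
  have hApos : ∀ x, 0 < A x := by
    intro x
    have h1 : (deriv F (Finv F x))⁻¹ < 0 := inv_lt_zero.mpr (hF' _)
    rw [hAdef]
    simpa using neg_pos.mpr h1
  have hderivFc : Continuous (deriv F) := hF.continuous_deriv le_rfl
  have hAc : Continuous A := ((hderivFc.comp hFinvc).inv₀ (fun x => (hF' _).ne)).neg
  -- the function B = (−2F)⁻¹
  set f2 : ℝ → ℝ := fun p => -2 * F p with hf2def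
  have hf2mono : StrictMono f2 := by
    intro a b hab
    have h1 := hanti hab
    simp only [hf2def]
    nlinarith
  have hf2surj : Function.Surjective f2 := by
    intro y; obtain ⟨x, hx⟩ := hsurj (-y / 2)
    exact ⟨x, by rw [hf2def]; simp [hx]; ring⟩
  set B : ℝ → ℝ := Function.invFun f2 with hBdef
  have hBR : ∀ y, f2 (B y) = y := fun y => Function.rightInverse_invFun hf2surj y
  set e2 : ℝ ≃o ℝ := StrictMono.orderIsoOfSurjective _ hf2mono hf2surj with he2
  have he2coe : ∀ x, e2 x = f2 x := fun x => by
    rw [he2, StrictMono.coe_orderIsoOfSurjective]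
  have hB_eq : B = fun y => e2.symm y := by
    funext y
    apply hf2mono.injective
    rw [hBR, ← he2coe, e2.apply_symm_apply]
  have hBc : Continuous B := by rw [hB_eq]; exact e2.symm.continuous
  have hBmono : Monotone B := by
    intro a b hab
    have h1 : f2 (B a) ≤ f2 (B b) := by rw [hBR, hBR]; exact hab
    exact hf2mono.le_iff_le.mp h1
  have hBtop : Tendsto B atTop atTop :=
    tendsto_atTop_atTop_of_monotone hBmono
      (fun b => ⟨f2 b, (Function.leftInverse_invFun hf2mono.injective b).ge⟩)
  -- the dominating function
  set h : ℝ → ℝ := fun x => max (A x) (B x) with hhdef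
  have hhc : Continuous h := hAc.max hBc
  have hhpos : ∀ x, 0 < h x := fun x => lt_max_of_lt_left (hApos x)
  set S : ℝ → ℝ := fun r => sSup (h '' Icc (-(r + 1)) (r + 1)) with hSdef
  have hSbdd : ∀ r : ℝ, BddAbove (h '' Icc (-(r + 1)) (r + 1)) := fun r =>
    (isCompact_Icc.image hhc).bddAbove
  have hSnonneg : ∀ r, 0 ≤ S r := by
    intro r
    by_cases hr : -1 ≤ r
    · have h0 : h 0 ≤ S r :=
        le_csSup (hSbdd r) ⟨0, ⟨by linarith, by linarith⟩, rfl⟩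
      exact le_trans (hhpos 0).le h0
    · rw [hSdef]
      simp only
      rw [Icc_eq_empty (by intro hc; push_neg at hr; linarith), image_empty,
        Real.sSup_empty]
  have hSmono : Monotone S := by
    intro r r' hrr'
    by_cases hr : -1 ≤ r
    · apply csSup_le_csSup (hSbdd r')
      · exact Nonempty.image _ (nonempty_Icc.mpr (by linarith))
      · exact image_mono (Icc_subset_Icc (by linarith) (by linarith))
    · have hempty : S r = 0 := by
        rw [hSdef]; simp only
        rw [Icc_eq_empty (by intro hc; push_neg at hr; linarith), image_empty,
          Real.sSup_empty]
      rw [hempty]; exact hSnonneg r'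
  have hhleS : ∀ x, h x ≤ S |x| :=
    fun x => le_csSup (hSbdd _)
      ⟨x, ⟨by have := neg_abs_le x; linarith, by have := le_abs_self x; linarith⟩, rfl⟩
  have hSint : ∀ a b : ℝ, IntervalIntegrable S MeasureTheory.volume a b :=
    fun a b => (hSmono.monotoneOn _).intervalIntegrable
  -- the admissible function
  set G : ℝ → ℝ := fun x => ∫ t in (|x|)..(|x| + 1), S t with hGdef
  have hhleG : ∀ x, h x ≤ G x := by
    intro x
    have h1 : (∫ t in (|x|)..(|x| + 1), S |x|) ≤ ∫ t in (|x|)..(|x| + 1), S t :=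
      intervalIntegral.integral_mono_on (by linarith) intervalIntegrable_const
        (hSint _ _) (fun t ht => hSmono ht.1)
    have h2 : (∫ t in (|x|)..(|x| + 1), S |x|) = S |x| := by
      rw [intervalIntegral.integral_const]; simp
    calc h x ≤ S |x| := hhleS x
      _ = _ := h2.symm
      _ ≤ G x := h1
  have hGshift : ∀ c : ℝ, 0 ≤ c → G c = ∫ t in (0:ℝ)..1, S (t + c) := by
    intro c hc
    rw [intervalIntegral.integral_comp_add_right S c]
    simp [hGdef, abs_of_nonneg hc, add_comm]
  have hGmonoAux : ∀ a b : ℝ, 0 ≤ a → a ≤ b → G a ≤ G b := by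
    intro a b ha hab
    rw [hGshift a ha, hGshift b (ha.trans hab)]
    apply intervalIntegral.integral_mono_on zero_le_one
      ((hSmono.comp (monotone_id.add_const a)).monotoneOn _).intervalIntegrable
      ((hSmono.comp (monotone_id.add_const b)).monotoneOn _).intervalIntegrable
    exact fun t _ => hSmono (by simp only [id_eq]; linarith)
  have hGmono : MonotoneOn G (Ici 0) := fun a ha b _ hab => hGmonoAux a b ha hab
  have hGeven : ∀ t : ℝ, G (-t) = G t := by
    intro t; rw [hGdef]; simp [abs_neg]
  have hGanti : AntitoneOn G (Iic 0) := by
    intro x hx y hy hxy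
    have h1 : G (-y) ≤ G (-x) := hGmonoAux (-y) (-x) (by simpa using hy) (by linarith)
    rwa [hGeven, hGeven] at h1
  have hP : Continuous fun r : ℝ => ∫ t in (0:ℝ)..r, S t :=
    intervalIntegral.continuous_primitive (fun a b => hSint a b) 0
  have hGeq : G = fun x => (∫ t in (0:ℝ)..(|x| + 1), S t) - ∫ t in (0:ℝ)..(|x|), S t := by
    funext x
    have h1 := intervalIntegral.integral_add_adjacent_intervals (hSint 0 (|x|))
      (hSint (|x|) (|x| + 1))
    rw [hGdef]
    simp only
    linarith
  have hGc : Continuous G := by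
    rw [hGeq]
    exact (hP.comp (continuous_abs.add continuous_const)).sub (hP.comp continuous_abs)
  constructor
  · refine ⟨G, hGc, ?_, ?_, hGeven, hGanti, hGmono⟩
    · intro x
      rw [hderivA, ← hf2def, ← hBdef]
      exact lt_max_of_lt_left (hApos x)
    · intro x
      rw [hderivA, ← hf2def, ← hBdef]
      exact hhleG x
  · rintro G' ⟨hc', hpos', hle', heven', hanti', hmono'⟩
    have hBle : ∀ x, B x ≤ G' x := by
      intro x
      refine le_trans ?_ (hle' x)
      rw [← hf2def, ← hBdef]
      exact le_max_right _ _
    have h1 : Tendsto G' atTop atTop := tendsto_atTop_mono hBle hBtop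
    refine ⟨h1, ?_⟩
    have h2 := h1.comp tendsto_neg_atBot_atTop
    simpa only [Function.comp_def, heven'] using h2
end
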